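/- arXiv:2508.05603 — 6 statements merged into one kernel-verified Lean document; each statement's English description precedes it below -/
import Mathlib

section
/- Let X₁, X₂ ∈ ℝ^{Z_N}, let Y_ℓ = X₂(ℓ+1) − X₁(ℓ), and define T and D as in the positive-temperature discrete periodic Pitman transform. Then for every i ∈ Z_N: e^{−D(X₁,X₂)(i)} + e^{−T(X₁,X₂)(i+1)} = e^{−X₁(i)} + e^{−X₂(i+1)}. -/
open Finset Real

variable {N : ℕ}

/-- Cyclic sum `Y_{[i,j]}` (closed-closed), going from `i` around to `j`. -/
noncomputable def cycCC [NeZero N] (Y : ZMod N → ℝ) (i j : ZMod N) : ℝ :=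
  ∑ ℓ ∈ Finset.range ((j - i).val + 1), Y (i + ℓ)

/-- Cyclic sum `Y_{(i,j]}` (open-closed), with `Y_{(i,i]} = 0`. -/
noncomputable def cycOC [NeZero N] (Y : ZMod N → ℝ) (i j : ZMod N) : ℝ :=
  ∑ ℓ ∈ Finset.range ((j - i).val), Y (i + 1 + ℓ)

/-- `Y_ℓ = X₂(ℓ+1) − X₁(ℓ)`. -/
noncomputable def Yv [NeZero N] (X₁ X₂ : ZMod N → ℝ) : ZMod N → ℝ :=
  fun ℓ => X₂ (ℓ + 1) - X₁ ℓ

/-- Positive-temperature periodic Pitman map `T`. -/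
noncomputable def Tmap [NeZero N] (X₁ X₂ : ZMod N → ℝ) (i : ZMod N) : ℝ :=
  X₁ (i - 1) + Real.log ((∑ j : ZMod N, Real.exp (cycCC (Yv X₁ X₂) (i - 1) j)) /
    (∑ j : ZMod N, Real.exp (cycCC (Yv X₁ X₂) i j)))

/-- Positive-temperature periodic Pitman map `D`. -/
noncomputable def Dmap [NeZero N] (X₁ X₂ : ZMod N → ℝ) (i : ZMod N) : ℝ :=
  X₂ (i + 1) + Real.log ((∑ j : ZMod N, Real.exp (cycOC (Yv X₁ X₂) i j)) /
    (∑ j : ZMod N, Real.exp (cycOC (Yv X₁ X₂) (i - 1) j)))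

/-- Zero-temperature periodic Pitman map `T̃`. -/
noncomputable def Tz [NeZero N] (X₁ X₂ : ZMod N → ℝ) (i : ZMod N) : ℝ :=
  X₁ (i - 1) + Finset.univ.sup' Finset.univ_nonempty (fun j => cycCC (Yv X₁ X₂) (i - 1) j)
    - Finset.univ.sup' Finset.univ_nonempty (fun j => cycCC (Yv X₁ X₂) i j)

/-- Zero-temperature periodic Pitman map `D̃`. -/
noncomputable def Dz [NeZero N] (X₁ X₂ : ZMod N → ℝ) (i : ZMod N) : ℝ :=
  X₂ (i + 1) + Finset.univ.sup' Finset.univ_nonempty (fun j => cycOC (Yv X₁ X₂) i j)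
    - Finset.univ.sup' Finset.univ_nonempty (fun j => cycOC (Yv X₁ X₂) (i - 1) j)

/-!
Write `A_k = ∑ⱼ e^{Y_{[k,j]}}` (`partitionCC`) and `B_k = ∑ⱼ e^{Y_{(k,j]}}` (`partitionOC`).
The two exponentials on the left are `e^{-X₂(i+1)} B_{i-1} / B_i` and
`e^{-X₁(i)} A_{i+1} / A_i`. Splitting off the first term of `Y_{[i,j]}` gives `A_i = e^{Y_i} B_i`,
and `Y_{[k+1,j]} = Y_{(k,j]}` for every `j ≠ k`, while at `j = k` the left side is the full period
sum `S` and the right side is `0`; hence `A_{k+1} + 1 = B_k + e^S`. Since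
`e^{-X₁(i)} = e^{Y_i} e^{-X₂(i+1)}`, both sides reduce to `e^{-X₂(i+1)} (e^{Y_i} + 1)`.
-/

namespace ZMod

lemma val_neg_one_add_one [NeZero N] : (-1 : ZMod N).val + 1 = N := by
  obtain ⟨n, rfl⟩ := Nat.exists_eq_succ_of_ne_zero (NeZero.ne N)
  rw [val_neg_one]

lemma val_add_one_of_ne_neg_one [NeZero N] {a : ZMod N} (h : a ≠ -1) :
    (a + 1).val = a.val + 1 := by
  have hcast : ((a.val + 1 : ℕ) : ZMod N) = a + 1 := by
    push_cast [natCast_zmod_val]; rfl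
  have hlt : a.val + 1 < N := by
    refine lt_of_le_of_ne (val_lt a) fun hN => h ?_
    rw [eq_neg_iff_add_eq_zero, ← hcast, hN, natCast_self]
  rw [← hcast, val_cast_of_lt hlt]

lemma sum_range_add_natCast {M : Type*} [AddCommMonoid M] [NeZero N] (f : ZMod N → M)
    (i : ZMod N) : ∑ ℓ ∈ range N, f (i + ℓ) = ∑ x : ZMod N, f x := by
  refine sum_nbij' (fun ℓ => i + (ℓ : ZMod N)) (fun x => (x - i).val) ?_ ?_ ?_ ?_ ?_
  · intros; exact mem_univ _
  · intro x _; exact mem_range.mpr (val_lt _)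
  · intro ℓ hℓ
    rw [add_sub_cancel_left, val_cast_of_lt (mem_range.mp hℓ)]
  · intro x _; simp
  · intros; rfl

end ZMod

section CyclicSums

variable [NeZero N] (Y : ZMod N → ℝ)

lemma cycOC_self (i : ZMod N) : cycOC Y i i = 0 := by
  simp [cycOC]

lemma cycCC_eq_add_cycOC (i j : ZMod N) : cycCC Y i j = Y i + cycOC Y i j := by
  rw [cycCC, cycOC, sum_range_succ', add_comm]
  push_cast
  simp only [add_zero, add_assoc, add_comm (1 : ZMod N)]

lemma cycCC_add_one_of_ne {i j : ZMod N} (h : j ≠ i) : cycCC Y (i + 1) j = cycOC Y i j := by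
  have hne : j - (i + 1) ≠ -1 := fun hc => h (by linear_combination hc)
  rw [cycCC, cycOC, ← ZMod.val_add_one_of_ne_neg_one hne, sub_add_eq_sub_sub, sub_add_cancel]

lemma cycCC_add_one_self (i : ZMod N) : cycCC Y (i + 1) i = ∑ x : ZMod N, Y x := by
  rw [cycCC, show i - (i + 1) = -1 by ring, ZMod.val_neg_one_add_one,
    ZMod.sum_range_add_natCast]

noncomputable def partitionCC (i : ZMod N) : ℝ := ∑ j : ZMod N, exp (cycCC Y i j)

noncomputable def partitionOC (i : ZMod N) : ℝ := ∑ j : ZMod N, exp (cycOC Y i j)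

lemma partitionCC_pos (i : ZMod N) : 0 < partitionCC Y i :=
  sum_pos (fun _ _ => exp_pos _) univ_nonempty

lemma partitionOC_pos (i : ZMod N) : 0 < partitionOC Y i :=
  sum_pos (fun _ _ => exp_pos _) univ_nonempty

lemma partitionCC_eq_exp_mul_partitionOC (i : ZMod N) :
    partitionCC Y i = exp (Y i) * partitionOC Y i := by
  simp only [partitionCC, partitionOC, mul_sum, cycCC_eq_add_cycOC, exp_add]

lemma partitionCC_add_one_add_one (i : ZMod N) :
    partitionCC Y (i + 1) + 1 = partitionOC Y i + exp (∑ x : ZMod N, Y x) := by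
  have hoff : ∑ j ∈ univ.erase i, exp (cycCC Y (i + 1) j) =
      ∑ j ∈ univ.erase i, exp (cycOC Y i j) :=
    sum_congr rfl fun j hj => by rw [cycCC_add_one_of_ne Y (mem_erase.mp hj).1]
  rw [partitionCC, partitionOC, ← add_sum_erase _ _ (mem_univ i),
    ← add_sum_erase _ (fun j => exp (cycOC Y i j)) (mem_univ i), hoff, cycCC_add_one_self,
    cycOC_self, exp_zero]
  ring

end CyclicSums

lemma Real.exp_neg_add_log (x : ℝ) {r : ℝ} (hr : 0 < r) :
    exp (-(x + log r)) = exp (-x) / r := by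
  rw [neg_add, exp_add, exp_neg (log r), exp_log hr, div_eq_mul_inv]

/-- `e^{−D(X₁,X₂)(i)} + e^{−T(X₁,X₂)(i+1)} = e^{−X₁(i)} + e^{−X₂(i+1)}`. -/
theorem exp_neg_Dmap_add_exp_neg_Tmap [NeZero N] (X₁ X₂ : ZMod N → ℝ) (i : ZMod N) :
    Real.exp (-(Dmap X₁ X₂ i)) + Real.exp (-(Tmap X₁ X₂ (i + 1))) =
      Real.exp (-(X₁ i)) + Real.exp (-(X₂ (i + 1))) := by
  set Y := Yv X₁ X₂
  have hB := partitionOC_pos Y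
  have hA := partitionCC_pos Y
  have hD : exp (-Dmap X₁ X₂ i) =
      exp (-X₂ (i + 1)) / (partitionOC Y i / partitionOC Y (i - 1)) :=
    exp_neg_add_log _ (div_pos (hB i) (hB (i - 1)))
  have hT : exp (-Tmap X₁ X₂ (i + 1)) =
      exp (-X₁ i) / (partitionCC Y i / partitionCC Y (i + 1)) := by
    rw [Tmap, add_sub_cancel_right]
    exact exp_neg_add_log _ (div_pos (hA i) (hA (i + 1)))
  have hX₁ : exp (-X₁ i) = exp (Y i) * exp (-X₂ (i + 1)) := by
    rw [← exp_add]; congr 1; simp only [Y, Yv]; ring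
  have hprev := partitionCC_add_one_add_one Y (i - 1)
  have hnext := partitionCC_add_one_add_one Y i
  rw [sub_add_cancel, partitionCC_eq_exp_mul_partitionOC] at hprev
  rw [hD, hT, hX₁, partitionCC_eq_exp_mul_partitionOC]
  have hBi := hB i
  have hexp := exp_pos (Y i)
  field_simp
  linear_combination hnext - hprev
end

section
/- Let W₁, W₂ ∈ ℝ^{Z_N} and define the positive-temperature periodic Pitman maps T and D. Then E(−W₂)·E(−W₁) = E(−D(W₂,W₁))·E(−T(W₂,W₁)), where for x ∈ ℝ^{Z_N}, E(x) is the bi-infinite ℤ×ℤ matrix (extended N-periodically) with e^{x_i} on the diagonal, 1 on the superdiagonal, and 0 elsewhere, and products of such matrices are well-defined entrywise. -/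
open Finset Real

variable {N : ℕ}

/-- Bi-infinite `ℤ×ℤ` matrix `E(x)` for an `N`-periodically extended vector `x`:
`e^{xᵢ}` on the diagonal, `1` on the superdiagonal, `0` elsewhere. -/
noncomputable def EmatZ [NeZero N] (x : ZMod N → ℝ) : ℤ → ℤ → ℝ :=
  fun i j => if j = i then Real.exp (x (i : ZMod N)) else if j = i + 1 then 1 else 0

/-- Entrywise product of upper-triangular `ℤ×ℤ` matrices (each entry is a finite sum). -/
noncomputable def mulUT (A B : ℤ → ℤ → ℝ) : ℤ → ℤ → ℝ :=
  fun i j => ∑ k ∈ Finset.Icc i j, A i k * B k j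

/- ### Auxiliary lemmas -/

lemma sum_range_zmod [NeZero N] (f : ZMod N → ℝ) :
    ∑ ℓ ∈ Finset.range N, f (ℓ : ZMod N) = ∑ x : ZMod N, f x := by
  refine Finset.sum_nbij' (fun ℓ => (ℓ : ZMod N)) (fun x => x.val) ?_ ?_ ?_ ?_ ?_
  · intro a _; exact Finset.mem_univ _
  · intro a _; exact Finset.mem_range.mpr (ZMod.val_lt a)
  · intro a ha; exact ZMod.val_cast_of_lt (Finset.mem_range.mp ha)
  · intro a _; exact ZMod.natCast_zmod_val a
  · intro a _; rfl

lemma val_sub_one_add_one [NeZero N] {a : ZMod N} (ha : a ≠ 0) :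
    (a - 1).val + 1 = a.val := by
  have hv : a.val ≠ 0 := fun h => ha ((ZMod.val_eq_zero a).mp h)
  have hlt : a.val < N := ZMod.val_lt a
  have h1 : ((a.val - 1 : ℕ) : ZMod N) = a - 1 := by
    have ha' : ((a.val : ℕ) : ZMod N) = a := ZMod.natCast_zmod_val a
    rw [Nat.cast_sub (by omega), ha', Nat.cast_one]
  rw [← h1, ZMod.val_cast_of_lt (by omega)]
  omega

lemma cycCC_eq [NeZero N] (Y : ZMod N → ℝ) (i j : ZMod N) :
    cycCC Y i j = Y i + cycOC Y i j := by
  unfold cycCC cycOC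
  rw [Finset.sum_range_succ']
  rw [add_comm]
  congr 1
  · norm_num
  · apply Finset.sum_congr rfl
    intro ℓ _
    congr 1
    push_cast
    ring

lemma cycCC_succ [NeZero N] (Y : ZMod N → ℝ) {i j : ZMod N} (h : j ≠ i) :
    cycCC Y (i + 1) j = cycOC Y i j := by
  unfold cycCC cycOC
  have h1 : j - (i + 1) = (j - i) - 1 := by ring
  have h2 : (j - (i + 1)).val + 1 = (j - i).val := by
    rw [h1]; exact val_sub_one_add_one (sub_ne_zero.mpr h)
  rw [h2]

lemma cycCC_full [NeZero N] (Y : ZMod N → ℝ) (i : ZMod N) :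
    cycCC Y (i + 1) i = ∑ x : ZMod N, Y x := by
  obtain ⟨M, rfl⟩ := Nat.exists_eq_succ_of_ne_zero (NeZero.ne N)
  unfold cycCC
  have h1 : i - (i + 1) = -1 := by ring
  have h2 : (i - (i + 1)).val + 1 = M + 1 := by
    rw [h1, ZMod.val_neg_one]
  rw [h2]
  rw [sum_range_zmod (fun x => Y (i + 1 + x))]
  exact Equiv.sum_comp (Equiv.addLeft (i + 1)) Y

lemma sumB_pos [NeZero N] (Y : ZMod N → ℝ) (i : ZMod N) :
    0 < ∑ j : ZMod N, Real.exp (cycOC Y i j) :=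
  Finset.sum_pos (fun _ _ => Real.exp_pos _) Finset.univ_nonempty

lemma sumA_pos [NeZero N] (Y : ZMod N → ℝ) (i : ZMod N) :
    0 < ∑ j : ZMod N, Real.exp (cycCC Y i j) :=
  Finset.sum_pos (fun _ _ => Real.exp_pos _) Finset.univ_nonempty

lemma sumA_eq [NeZero N] (Y : ZMod N → ℝ) (i : ZMod N) :
    ∑ j : ZMod N, Real.exp (cycCC Y i j) =
      Real.exp (Y i) * ∑ j : ZMod N, Real.exp (cycOC Y i j) := by
  rw [Finset.mul_sum]
  apply Finset.sum_congr rfl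
  intro j _
  rw [cycCC_eq, Real.exp_add]

lemma sumA_succ [NeZero N] (Y : ZMod N → ℝ) (i : ZMod N) :
    ∑ j : ZMod N, Real.exp (cycCC Y (i + 1) j) =
      (∑ j : ZMod N, Real.exp (cycOC Y i j)) + Real.exp (∑ x : ZMod N, Y x) - 1 := by
  have h1 : ∑ j ∈ Finset.univ.erase i, Real.exp (cycCC Y (i + 1) j)
      + Real.exp (cycCC Y (i + 1) i) = ∑ j : ZMod N, Real.exp (cycCC Y (i + 1) j) :=
    Finset.sum_erase_add Finset.univ _ (Finset.mem_univ i)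
  have h2 : ∑ j ∈ Finset.univ.erase i, Real.exp (cycOC Y i j)
      + Real.exp (cycOC Y i i) = ∑ j : ZMod N, Real.exp (cycOC Y i j) :=
    Finset.sum_erase_add Finset.univ _ (Finset.mem_univ i)
  have h3 : ∑ j ∈ Finset.univ.erase i, Real.exp (cycCC Y (i + 1) j) =
      ∑ j ∈ Finset.univ.erase i, Real.exp (cycOC Y i j) := by
    apply Finset.sum_congr rfl
    intro j hj
    rw [cycCC_succ Y (Finset.mem_erase.mp hj).1]
  have h4 : cycOC Y i i = 0 := by unfold cycOC; simp
  rw [← h1, ← h2, h3, cycCC_full, h4, Real.exp_zero]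
  ring

/- ### The two pointwise Pitman identities -/

lemma pitman_sum [NeZero N] (W₁ W₂ : ZMod N → ℝ) (i : ZMod N) :
    Dmap W₂ W₁ i + Tmap W₂ W₁ i = W₂ i + W₁ i := by
  set Y := Yv W₂ W₁ with hY
  unfold Dmap Tmap
  rw [← hY]
  have hB : ∀ k : ZMod N, 0 < ∑ j : ZMod N, Real.exp (cycOC Y k j) := sumB_pos Y
  rw [sumA_eq Y (i - 1), sumA_eq Y i]
  rw [Real.log_div (hB i).ne' (hB (i - 1)).ne',
    Real.log_div (by positivity) (by positivity),
    Real.log_mul (Real.exp_pos _).ne' (hB (i - 1)).ne',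
    Real.log_mul (Real.exp_pos _).ne' (hB i).ne',
    Real.log_exp, Real.log_exp]
  have hii : i - 1 + 1 = i := by ring
  simp only [hY, Yv, hii]
  ring

lemma pitman_exp [NeZero N] (W₁ W₂ : ZMod N → ℝ) (i : ZMod N) :
    Real.exp (-Dmap W₂ W₁ i) + Real.exp (-Tmap W₂ W₁ (i + 1)) =
      Real.exp (-W₂ i) + Real.exp (-W₁ (i + 1)) := by
  set Y := Yv W₂ W₁ with hY
  have key : ∀ c p q : ℝ, 0 < p → 0 < q →
      Real.exp (-(c + Real.log (p / q))) = Real.exp (-c) * q / p := by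
    intro c p q hp hq
    rw [neg_add, Real.exp_add, Real.exp_neg (Real.log _), Real.exp_log (div_pos hp hq)]
    field_simp
  have hB : ∀ k : ZMod N, 0 < ∑ j : ZMod N, Real.exp (cycOC Y k j) := sumB_pos Y
  have hA : ∀ k : ZMod N, 0 < ∑ j : ZMod N, Real.exp (cycCC Y k j) := sumA_pos Y
  unfold Dmap Tmap
  rw [← hY]
  rw [key _ _ _ (hB i) (hB (i - 1)), key _ _ _ (hA (i + 1 - 1)) (hA (i + 1))]
  have hii : i + 1 - 1 = i := by ring
  rw [hii]
  have hBprev : (∑ j : ZMod N, Real.exp (cycOC Y (i - 1) j)) =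
      (∑ j : ZMod N, Real.exp (cycCC Y i j)) - Real.exp (∑ x : ZMod N, Y x) + 1 := by
    have := sumA_succ Y (i - 1)
    have hii2 : i - 1 + 1 = i := by ring
    rw [hii2] at this
    linarith
  have hAnext : (∑ j : ZMod N, Real.exp (cycCC Y (i + 1) j)) =
      (∑ j : ZMod N, Real.exp (cycOC Y i j)) + Real.exp (∑ x : ZMod N, Y x) - 1 :=
    sumA_succ Y i
  rw [hBprev, hAnext, sumA_eq Y i]
  have hW : Real.exp (-W₂ i) = Real.exp (Y i) * Real.exp (-W₁ (i + 1)) := by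
    rw [← Real.exp_add]
    congr 1
    simp only [hY, Yv]
    ring
  rw [hW]
  have hb := hB i
  have hy := Real.exp_pos (Y i)
  field_simp
  ring

/- ### Evaluating the upper-triangular product of two `EmatZ` matrices -/

lemma mulUT_EmatZ [NeZero N] (x y : ZMod N → ℝ) (i j : ℤ) :
    mulUT (EmatZ x) (EmatZ y) i j =
      if j = i then Real.exp (x (i : ZMod N)) * Real.exp (y (i : ZMod N))
      else if j = i + 1 then Real.exp (x (i : ZMod N)) + Real.exp (y ((i + 1 : ℤ) : ZMod N))
      else if j = i + 2 then 1 else 0 := by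
  unfold mulUT EmatZ
  rcases lt_trichotomy j i with h | rfl | h
  · rw [Finset.Icc_eq_empty (by omega), Finset.sum_empty]
    split_ifs <;> first | rfl | omega
  · rw [Finset.Icc_self, Finset.sum_singleton]
    simp
  · by_cases h1 : j = i + 1
    · subst h1
      have hI : Finset.Icc i (i + 1) = {i, i + 1} := by
        ext k; simp only [Finset.mem_Icc, Finset.mem_insert, Finset.mem_singleton]; omega
      rw [hI, Finset.sum_pair (by omega : i ≠ i + 1)]
      split_ifs <;> first | ring1 | omega
    · by_cases h2 : j = i + 2
      · subst h2
        rw [Finset.sum_eq_single_of_mem (i + 1)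
          (by simp only [Finset.mem_Icc]; omega)]
        · split_ifs <;> first | ring1 | omega
        · intro k hk hne
          simp only [Finset.mem_Icc] at hk
          split_ifs <;> first | ring1 | omega
      · rw [Finset.sum_eq_zero]
        · split_ifs <;> first | rfl | omega
        · intro k hk
          simp only [Finset.mem_Icc] at hk
          split_ifs <;> first | ring1 | omega

/-- `E(−W₂)·E(−W₁) = E(−D(W₂,W₁))·E(−T(W₂,W₁))`. -/
theorem EmatZ_mul_pitman [NeZero N] (W₁ W₂ : ZMod N → ℝ) :
    mulUT (EmatZ (fun i => -W₂ i)) (EmatZ (fun i => -W₁ i)) =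
      mulUT (EmatZ (fun i => -(Dmap W₂ W₁ i))) (EmatZ (fun i => -(Tmap W₂ W₁ i))) := by
  funext i j
  rw [mulUT_EmatZ, mulUT_EmatZ]
  split_ifs with h1 h2
  · rw [← Real.exp_add, ← Real.exp_add]
    congr 1
    have := pitman_sum W₁ W₂ (i : ZMod N)
    linarith
  · push_cast
    exact (pitman_exp W₁ W₂ (i : ZMod N)).symm
  · rfl
  · rfl
end

section
/- Let W₁, W₂ ∈ ℝ^{Z_N}, extended periodically to ℤ-indexed sequences. Then H(W₁)·H(W₂) = H(T(W₂,W₁))·H(D(W₂,W₁)) as ℤ×ℤ matrices, where H(x)_{i,j} = exp(x_i + ... + x_j) for i ≤ j and 0 otherwise, and T, D are the positive-temperature periodic Pitman maps. -/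
/-!
Write `w₁, w₂` for the periodic extensions of `W₁, W₂` and let `Z = pitmanPot W₁ W₂` be a
discrete primitive of `Y = Yv W₂ W₁`, i.e. `Z (k + 1) - Z k = Y k`. Then
`H(w₁)_{ik} H(w₂)_{kj} = C_{ij} e^{Z k}`. With `G = pitmanWeight W₁ W₂`, that is
`G k = ∑_{m < N} e^{Z (k + 1 + m)}`, the cyclic sums in the Pitman maps reduce to
`T(W₂,W₁) s = w₁ s + log (G (s - 1) / G s)` and `D(W₂,W₁) s = w₂ s + log (G s / G (s - 1))`,
so each term of the right-hand product is the corresponding term of the left-hand one times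
`G (i - 1) G j / (G (k - 1) G k)`. Periodicity of `Y` gives
`G k - G (k - 1) = (e^{∑ Y} - 1) e^{Z k}`, and this makes the weighted sum telescope to the
unweighted one.
-/

open Finset Real

variable {N : ℕ}

/-- Upper-triangular `ℤ×ℤ` matrix `H(x)` with `H(x)_{i,j} = e^{xᵢ + ⋯ + xⱼ}` for `i ≤ j`. -/
noncomputable def HmatZ (x : ℤ → ℝ) : ℤ → ℤ → ℝ :=
  fun i j => if i ≤ j then Real.exp (∑ s ∈ Finset.Icc i j, x s) else 0

theorem Finset.sum_Icc_sub_sub_one {M : Type*} [AddCommGroup M] (F : ℤ → M) {i k : ℤ}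
    (h : i ≤ k + 1) : ∑ s ∈ Icc i k, (F s - F (s - 1)) = F k - F (i - 1) := by
  induction k, (show i - 1 ≤ k by omega) using Int.leInduction with
  | base => simp
  | succ n hn ih =>
    rw [← insert_Icc_right_eq_Icc_add_one (by omega), sum_insert (by simp), ih (by omega),
      add_sub_cancel_right]
    abel

noncomputable def partialSum (x : ℤ → ℝ) (n : ℤ) : ℝ :=
  ∑ s ∈ Ioc 0 n, x s - ∑ s ∈ Ioc n 0, x s

theorem partialSum_sub_partialSum_sub_one (x : ℤ → ℝ) (n : ℤ) :
    partialSum x n - partialSum x (n - 1) = x n := by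
  unfold partialSum
  rcases le_or_gt n 0 with hn | hn
  · rw [Ioc_eq_empty_of_le hn, Ioc_eq_empty_of_le (by omega : n - 1 ≤ 0),
      ← insert_Ioc_left_eq_Ioc_sub_one hn, sum_insert (by simp)]
    ring
  · rw [Ioc_eq_empty_of_le hn.le, Ioc_eq_empty_of_le (by omega : 0 ≤ n - 1),
      ← insert_Ioc_sub_one_right_eq_Ioc hn, sum_insert (by simp)]
    ring

theorem sum_Icc_eq_partialSum_sub (x : ℤ → ℝ) {i k : ℤ} (h : i ≤ k + 1) :
    ∑ s ∈ Icc i k, x s = partialSum x k - partialSum x (i - 1) := by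
  simp_rw [← Finset.sum_Icc_sub_sub_one _ h, partialSum_sub_partialSum_sub_one]

theorem HmatZ_mul_HmatZ (x y : ℤ → ℝ) {i k j : ℤ} (hik : i ≤ k) (hkj : k ≤ j) :
    HmatZ x i k * HmatZ y k j = exp (partialSum y j - partialSum x (i - 1)) *
      exp (partialSum x k - partialSum y (k - 1)) := by
  rw [HmatZ, HmatZ, if_pos hik, if_pos hkj, sum_Icc_eq_partialSum_sub x (by omega),
    sum_Icc_eq_partialSum_sub y (by omega), ← exp_add, ← exp_add]
  ring_nf

theorem HmatZ_eq_mul_exp_sub {x y f : ℤ → ℝ} (hy : ∀ s, y s = x s + (f (s - 1) - f s))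
    (i k : ℤ) : HmatZ y i k = HmatZ x i k * exp (f (i - 1) - f k) := by
  obtain rfl : y = fun s => x s + (f (s - 1) - f s) := funext hy
  unfold HmatZ
  split_ifs with h
  · have htel : ∑ s ∈ Icc i k, (f (s - 1) - f s) = f (i - 1) - f k := by
      rw [← neg_sub, ← Finset.sum_Icc_sub_sub_one f (by omega), ← sum_neg_distrib]
      simp only [neg_sub]
    rw [sum_add_distrib, htel, exp_add]
  · rw [zero_mul]

theorem sum_Icc_div_mul_sub_one {K : Type*} [Field K] (g u : ℤ → K) (a : K)
    (hg : ∀ k, g k ≠ 0) (hstep : ∀ k, g k = g (k - 1) + a * u k) (i j : ℤ) :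
    ∑ k ∈ Icc i j, u k / (g (k - 1) * g k) = (∑ k ∈ Icc i j, u k) / (g (i - 1) * g j) := by
  rcases lt_or_ge j i with hji | hij
  · simp [Icc_eq_empty_of_lt hji]
  induction j, hij using Int.leInduction with
  | base => simp
  | succ n hn ih =>
    have hsum : g n = g (i - 1) + a * ∑ k ∈ Icc i n, u k := by
      rw [mul_sum, ← sub_eq_iff_eq_add', ← Finset.sum_Icc_sub_sub_one g (by omega)]
      exact sum_congr rfl fun k _ => sub_eq_iff_eq_add'.2 (hstep k)
    have hnext := hstep (n + 1)
    rw [add_sub_cancel_right] at hnext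
    rw [← insert_Icc_right_eq_Icc_add_one (by omega), sum_insert (by simp), sum_insert (by simp),
      ih, add_sub_cancel_right]
    have := hg (i - 1); have := hg n; have := hg (n + 1)
    field_simp
    linear_combination (∑ k ∈ Icc i n, u k) * hnext - u (n + 1) * hsum

theorem ZMod.sum_val_sub {M : Type*} [AddCommMonoid M] [NeZero N] (a : ZMod N) (F : ℕ → M) :
    ∑ j : ZMod N, F (j - a).val = ∑ ℓ ∈ range N, F ℓ := by
  refine ((Equiv.subRight a).sum_comp (fun j => F j.val)).trans ?_
  obtain ⟨n, rfl⟩ : ∃ n, N = n + 1 := Nat.exists_eq_succ_of_ne_zero (NeZero.ne N)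
  exact Fin.sum_univ_eq_sum_range F (n + 1)

section Pitman

variable [NeZero N] (W₁ W₂ : ZMod N → ℝ)

noncomputable def pitmanPot (k : ℤ) : ℝ :=
  partialSum (fun s => W₁ s) k - partialSum (fun s => W₂ s) (k - 1)

theorem pitmanPot_add_one_sub (k : ℤ) :
    pitmanPot W₁ W₂ (k + 1) - pitmanPot W₁ W₂ k = Yv W₂ W₁ k := by
  have h₁ := partialSum_sub_partialSum_sub_one (fun s => W₁ s) (k + 1)
  have h₂ := partialSum_sub_partialSum_sub_one (fun s => W₂ s) k
  simp only [add_sub_cancel_right, Int.cast_add, Int.cast_one] at h₁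
  simp only [pitmanPot, Yv, add_sub_cancel_right]
  linarith

theorem sum_range_Yv (s : ℤ) (m : ℕ) :
    ∑ ℓ ∈ range m, Yv W₂ W₁ ((s : ZMod N) + ℓ) = pitmanPot W₁ W₂ (s + m) - pitmanPot W₁ W₂ s := by
  have htel := Finset.sum_range_sub (fun ℓ : ℕ => pitmanPot W₁ W₂ (s + ℓ)) m
  rw [Nat.cast_zero, add_zero] at htel
  rw [← htel]
  refine sum_congr rfl fun ℓ _ => ?_
  rw [Nat.cast_succ, ← add_assoc, pitmanPot_add_one_sub]
  push_cast
  rfl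

noncomputable def pitmanWeight (n : ℤ) : ℝ :=
  ∑ m ∈ range N, exp (pitmanPot W₁ W₂ (n + 1 + m))

theorem pitmanWeight_pos (n : ℤ) : 0 < pitmanWeight W₁ W₂ n :=
  sum_pos (fun _ _ => exp_pos _) (nonempty_range_iff.2 (NeZero.ne N))

theorem sum_exp_cycCC (s : ℤ) :
    ∑ j : ZMod N, exp (cycCC (Yv W₂ W₁) s j) =
      exp (-pitmanPot W₁ W₂ s) * pitmanWeight W₁ W₂ s := by
  rw [pitmanWeight, mul_sum]
  refine (ZMod.sum_val_sub _
    (fun n => exp (∑ ℓ ∈ range (n + 1), Yv W₂ W₁ ((s : ZMod N) + ℓ)))).trans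
    (sum_congr rfl fun ℓ _ => ?_)
  rw [sum_range_Yv, ← exp_add]
  push_cast
  ring_nf

theorem sum_exp_cycOC (s : ℤ) :
    ∑ j : ZMod N, exp (cycOC (Yv W₂ W₁) s j) =
      exp (-pitmanPot W₁ W₂ (s + 1)) * pitmanWeight W₁ W₂ s := by
  have hs : (s : ZMod N) + 1 = ((s + 1 : ℤ) : ZMod N) := by push_cast; rfl
  rw [pitmanWeight, mul_sum]
  simp only [cycOC, hs]
  refine (ZMod.sum_val_sub _
    (fun n => exp (∑ ℓ ∈ range n, Yv W₂ W₁ (((s + 1 : ℤ) : ZMod N) + ℓ)))).trans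
    (sum_congr rfl fun ℓ _ => ?_)
  rw [sum_range_Yv, ← exp_add]
  ring_nf

theorem Tmap_intCast (s : ℤ) :
    Tmap W₂ W₁ s = W₁ s + (log (pitmanWeight W₁ W₂ (s - 1)) - log (pitmanWeight W₁ W₂ s)) := by
  have hG := pitmanWeight_pos W₁ W₂
  have hY := pitmanPot_add_one_sub W₁ W₂ (s - 1)
  simp only [Yv, sub_add_cancel, Int.cast_sub, Int.cast_one] at hY
  rw [Tmap, show (s : ZMod N) - 1 = ((s - 1 : ℤ) : ZMod N) by push_cast; rfl, sum_exp_cycCC,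
    sum_exp_cycCC, mul_div_mul_comm, ← exp_sub, log_mul (exp_pos _).ne' (div_pos (hG _) (hG _)).ne',
    log_exp, log_div (hG _).ne' (hG _).ne']
  push_cast at hY ⊢
  linarith

theorem Dmap_intCast (s : ℤ) :
    Dmap W₂ W₁ s = W₂ s + (log (pitmanWeight W₁ W₂ s) - log (pitmanWeight W₁ W₂ (s - 1))) := by
  have hG := pitmanWeight_pos W₁ W₂
  have hY := pitmanPot_add_one_sub W₁ W₂ s
  simp only [Yv] at hY
  rw [Dmap, show (s : ZMod N) - 1 = ((s - 1 : ℤ) : ZMod N) by push_cast; rfl, sum_exp_cycOC,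
    sum_exp_cycOC, sub_add_cancel, mul_div_mul_comm, ← exp_sub,
    log_mul (exp_pos _).ne' (div_pos (hG _) (hG _)).ne', log_exp, log_div (hG _).ne' (hG _).ne']
  linarith

theorem pitmanWeight_eq_sub_one_add (n : ℤ) :
    pitmanWeight W₁ W₂ n = pitmanWeight W₁ W₂ (n - 1) +
      (exp (∑ t, Yv W₂ W₁ t) - 1) * exp (pitmanPot W₁ W₂ n) := by
  have hperiod : pitmanPot W₁ W₂ (n + N) = pitmanPot W₁ W₂ n + ∑ t, Yv W₂ W₁ t := by
    have h := ZMod.sum_val_sub (n : ZMod N) (fun ℓ => Yv W₂ W₁ ((n : ZMod N) + ℓ))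
    simp only [ZMod.natCast_zmod_val, add_sub_cancel] at h
    rw [h, sum_range_Yv]
    ring
  have hsplit := (sum_range_succ (fun m : ℕ => exp (pitmanPot W₁ W₂ (n + m))) N).symm.trans
    (sum_range_succ' (fun m : ℕ => exp (pitmanPot W₁ W₂ (n + m))) N)
  simp only [Nat.cast_add, Nat.cast_one, Nat.cast_zero, add_zero, ← add_assoc,
    add_right_comm _ _ (1 : ℤ), hperiod, exp_add] at hsplit
  simp only [pitmanWeight, sub_add_cancel]
  linear_combination -hsplit

end Pitman

/-- `H(W₁)·H(W₂) = H(T(W₂,W₁))·H(D(W₂,W₁))` for `N`-periodically extended vectors. -/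
theorem HmatZ_mul_pitman [NeZero N] (W₁ W₂ : ZMod N → ℝ) :
    mulUT (HmatZ fun s : ℤ => W₁ (s : ZMod N)) (HmatZ fun s : ℤ => W₂ (s : ZMod N)) =
      mulUT (HmatZ fun s : ℤ => Tmap W₂ W₁ (s : ZMod N))
        (HmatZ fun s : ℤ => Dmap W₂ W₁ (s : ZMod N)) := by
  set G := pitmanWeight W₁ W₂
  have hG : ∀ k, 0 < G k := pitmanWeight_pos W₁ W₂
  have hD (s : ℤ) : Dmap W₂ W₁ s = W₂ s + (-log (G (s - 1)) - -log (G s)) := by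
    rw [Dmap_intCast]; ring
  funext i j
  simp only [mulUT, HmatZ_eq_mul_exp_sub (f := fun s => log (G s)) (Tmap_intCast W₁ W₂),
    HmatZ_eq_mul_exp_sub (f := fun s => -log (G s)) hD]
  set C := exp (partialSum (fun s => W₂ s) j - partialSum (fun s => W₁ s) (i - 1))
  have hprod : ∀ k ∈ Icc i j, HmatZ (fun s : ℤ => W₁ s) i k * HmatZ (fun s : ℤ => W₂ s) k j =
      C * exp (pitmanPot W₁ W₂ k) := fun k hk =>
    HmatZ_mul_HmatZ _ _ (mem_Icc.1 hk).1 (mem_Icc.1 hk).2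
  calc ∑ k ∈ Icc i j, HmatZ (fun s : ℤ => W₁ s) i k * HmatZ (fun s : ℤ => W₂ s) k j
      = C * ∑ k ∈ Icc i j, exp (pitmanPot W₁ W₂ k) := by rw [mul_sum]; exact sum_congr rfl hprod
    _ = C * (G (i - 1) * G j * ∑ k ∈ Icc i j, exp (pitmanPot W₁ W₂ k) / (G (k - 1) * G k)) := by
      rw [sum_Icc_div_mul_sub_one G _ _ (fun k => (hG k).ne') (pitmanWeight_eq_sub_one_add W₁ W₂),
        mul_div_cancel₀ _ (mul_pos (hG _) (hG _)).ne']
    _ = _ := by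
      rw [mul_sum, mul_sum]
      refine sum_congr rfl fun k hk => ?_
      rw [mul_mul_mul_comm, hprod k hk]
      simp only [exp_sub, exp_neg, exp_log (hG _)]
      field_simp
end

section
/- Let N ≥ 1 and let Y₁, Y₂, Y₁', Y₂' ∈ ℝ^{Z_N} satisfy ∑_i Y₁(i) = ∑_i Y₁'(i) and ∑_i Y₂(i) = ∑_i Y₂'(i). If the two-column periodic polymer partition functions agree, i.e. Z^{(Y₁,Y₂)}(2, j | 1, i) = Z^{(Y₁',Y₂')}(2, j | 1, i) for all i, j ∈ ℤ (with weights extended N-periodically in the vertical direction), then Y₁ = Y₁' and Y₂ = Y₂'. -/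
open Finset Real

/-- If two pairs of `N`-periodic column vectors have matching column sums and matching
two-column polymer partition functions `Z(2,j | 1,i)` for all `i ≤ j` in `ℤ`, then the
pairs are equal. -/
theorem two_column_partition_determines_weights {N : ℕ} [NeZero N]
    (Y₁ Y₂ Y₁' Y₂' : ZMod N → ℝ)
    (h1 : ∑ i : ZMod N, Y₁ i = ∑ i : ZMod N, Y₁' i)
    (h2 : ∑ i : ZMod N, Y₂ i = ∑ i : ZMod N, Y₂' i)
    (hZ : ∀ i j : ℤ, i ≤ j →
      (∑ r ∈ Finset.Icc i j,
        Real.exp (∑ s ∈ Finset.Icc i r, Y₁ (s : ZMod N)) *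
          Real.exp (∑ s ∈ Finset.Icc r j, Y₂ (s : ZMod N))) =
      ∑ r ∈ Finset.Icc i j,
        Real.exp (∑ s ∈ Finset.Icc i r, Y₁' (s : ZMod N)) *
          Real.exp (∑ s ∈ Finset.Icc r j, Y₂' (s : ZMod N))) :
    Y₁ = Y₁' ∧ Y₂ = Y₂' := by
  -- Step 1: diagonal partition functions give pointwise product equality
  have hS : ∀ i : ℤ, exp (Y₁ (i : ZMod N)) * exp (Y₂ (i : ZMod N)) =
      exp (Y₁' (i : ZMod N)) * exp (Y₂' (i : ZMod N)) := by
    intro i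
    have := hZ i i le_rfl
    simpa using this
  -- Step 2: off-diagonal (j = i+1) gives the two-term equation
  have hT : ∀ i : ℤ,
      exp (Y₁ (i : ZMod N)) * exp (Y₂ (i : ZMod N)) * exp (Y₂ ((i+1 : ℤ) : ZMod N)) +
      exp (Y₁ (i : ZMod N)) * exp (Y₁ ((i+1 : ℤ) : ZMod N)) * exp (Y₂ ((i+1 : ℤ) : ZMod N)) =
      exp (Y₁' (i : ZMod N)) * exp (Y₂' (i : ZMod N)) * exp (Y₂' ((i+1 : ℤ) : ZMod N)) +
      exp (Y₁' (i : ZMod N)) * exp (Y₁' ((i+1 : ℤ) : ZMod N)) * exp (Y₂' ((i+1 : ℤ) : ZMod N)) := by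
    intro i
    have h := hZ i (i+1) (by omega)
    have hpair : Finset.Icc i (i+1) = {i, i+1} := by
      ext x; simp [Finset.mem_Icc]; omega
    have hne : i ≠ i + 1 := by omega
    rw [hpair] at h
    rw [Finset.sum_pair hne] at h
    simp only [Finset.Icc_self, Finset.sum_singleton, hpair, Finset.sum_pair hne,
      Real.exp_add] at h
    linarith [h]
  -- abbreviation: difference of exponentials of first column
  set a : ℤ → ℝ := fun i => exp (Y₁ (i : ZMod N)) - exp (Y₁' (i : ZMod N)) with ha
  -- Step 3: recursion with positive multiplier
  have hrec : ∀ i : ℤ, a (i+1) * (exp (Y₁ (i : ZMod N)) * exp (Y₂ (i : ZMod N))) =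
      a i * (exp (Y₁ ((i+1:ℤ) : ZMod N)) * exp (Y₁' ((i+1:ℤ) : ZMod N))) := by
    intro i
    have e1 := hS i
    have e2 := hS (i+1)
    have e3 := hT i
    have hQ : exp (Y₂' ((i+1:ℤ) : ZMod N)) ≠ 0 := (Real.exp_pos _).ne'
    set p := exp (Y₁ (i : ZMod N))
    set q := exp (Y₂ (i : ZMod N))
    set P := exp (Y₁ ((i+1:ℤ) : ZMod N))
    set Q := exp (Y₂ ((i+1:ℤ) : ZMod N))
    set p' := exp (Y₁' (i : ZMod N))
    set q' := exp (Y₂' (i : ZMod N))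
    set P' := exp (Y₁' ((i+1:ℤ) : ZMod N))
    set Q' := exp (Y₂' ((i+1:ℤ) : ZMod N))
    have key : ((P - P') * (p * q)) * Q = ((p - p') * (P * P')) * Q := by
      linear_combination (-P') * e3 + (P * Q) * e1 + (p' * q' + p' * P') * e2
    have hQ0 : Q ≠ 0 := (Real.exp_pos _).ne'
    have := mul_right_cancel₀ hQ0 key
    simp only [ha]
    linarith [this]
  -- Step 4: sign propagation
  have hX : ∀ i : ℤ, (0:ℝ) < exp (Y₁ (i : ZMod N)) * exp (Y₂ (i : ZMod N)) :=
    fun i => mul_pos (Real.exp_pos _) (Real.exp_pos _)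
  have hY : ∀ i : ℤ, (0:ℝ) < exp (Y₁ ((i+1:ℤ) : ZMod N)) * exp (Y₁' ((i+1:ℤ) : ZMod N)) :=
    fun i => mul_pos (Real.exp_pos _) (Real.exp_pos _)
  have hpos : ∀ i : ℤ, 0 < a i → 0 < a (i+1) := by
    intro i hi
    have h := hrec i
    have h2 : 0 < a (i+1) * (exp (Y₁ (i : ZMod N)) * exp (Y₂ (i : ZMod N))) := by
      rw [h]; exact mul_pos hi (hY i)
    by_contra hc
    push_neg at hc
    have := mul_nonpos_of_nonpos_of_nonneg hc (hX i).le
    linarith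
  have hneg : ∀ i : ℤ, a i < 0 → a (i+1) < 0 := by
    intro i hi
    have h := hrec i
    have h2 : a (i+1) * (exp (Y₁ (i : ZMod N)) * exp (Y₂ (i : ZMod N))) < 0 := by
      rw [h]; exact mul_neg_of_neg_of_pos hi (hY i)
    by_contra hc
    push_neg at hc
    have := mul_nonneg hc (hX i).le
    linarith
  have hzero : ∀ i : ℤ, a i = 0 → a (i+1) = 0 := by
    intro i hi
    have h := hrec i
    rw [hi, zero_mul] at h
    rcases mul_eq_zero.mp h with h' | h'
    · exact h'
    · exact absurd h' (hX i).ne'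
  -- propagate from 0 to all naturals
  have hposN : 0 < a 0 → ∀ n : ℕ, 0 < a n := by
    intro h0 n
    induction n with
    | zero => simpa using h0
    | succ k ih =>
      have := hpos k ih
      have hcast : ((k : ℤ) + 1) = ((k + 1 : ℕ) : ℤ) := by push_cast; ring
      rwa [hcast] at this
  have hnegN : a 0 < 0 → ∀ n : ℕ, a n < 0 := by
    intro h0 n
    induction n with
    | zero => simpa using h0
    | succ k ih =>
      have := hneg k ih
      have hcast : ((k : ℤ) + 1) = ((k + 1 : ℕ) : ℤ) := by push_cast; ring
      rwa [hcast] at this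
  have hzeroN : a 0 = 0 → ∀ n : ℕ, a n = 0 := by
    intro h0 n
    induction n with
    | zero => simpa using h0
    | succ k ih =>
      have := hzero k ih
      have hcast : ((k : ℤ) + 1) = ((k + 1 : ℕ) : ℤ) := by push_cast; ring
      rwa [hcast] at this
  -- every element of ZMod N is a natural number cast
  have hsurj : ∀ z : ZMod N, ∃ n : ℕ, ((n : ℤ) : ZMod N) = z := by
    intro z
    exact ⟨z.val, by push_cast; simp [ZMod.natCast_val, ZMod.cast_id]⟩
  have huniv : (Finset.univ : Finset (ZMod N)).Nonempty := Finset.univ_nonempty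
  -- rule out a 0 > 0 and a 0 < 0 using the equal column sums
  have hA0 : a 0 = 0 := by
    rcases lt_trichotomy (a 0) 0 with h0 | h0 | h0
    · exfalso
      have hlt : ∀ z : ZMod N, Y₁ z < Y₁' z := by
        intro z
        obtain ⟨n, hn⟩ := hsurj z
        have := hnegN h0 n
        rw [ha] at this
        simp only [hn] at this
        have := Real.exp_lt_exp.mp (by linarith : exp (Y₁ z) < exp (Y₁' z))
        exact this
      have := Finset.sum_lt_sum_of_nonempty huniv (fun z _ => hlt z)
      linarith [h1, this]
    · exact h0
    · exfalso
      have hlt : ∀ z : ZMod N, Y₁' z < Y₁ z := by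
        intro z
        obtain ⟨n, hn⟩ := hsurj z
        have := hposN h0 n
        rw [ha] at this
        simp only [hn] at this
        exact Real.exp_lt_exp.mp (by linarith : exp (Y₁' z) < exp (Y₁ z))
      have := Finset.sum_lt_sum_of_nonempty huniv (fun z _ => hlt z)
      linarith [h1, this]
  -- conclude Y₁ = Y₁'
  have hY1 : Y₁ = Y₁' := by
    funext z
    obtain ⟨n, hn⟩ := hsurj z
    have := hzeroN hA0 n
    rw [ha] at this
    simp only [hn] at this
    exact Real.exp_injective (by linarith)
  refine ⟨hY1, ?_⟩
  funext z
  obtain ⟨n, hn⟩ := hsurj z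
  have h := hS n
  rw [hY1] at h
  simp only [hn] at h
  have hp : exp (Y₁' z) ≠ 0 := (Real.exp_pos _).ne'
  have := mul_left_cancel₀ hp h
  exact Real.exp_injective this
end

section
/- Let p₁, p₂ ∈ (0,1) and q : Z_N → (0,1] with p₁q_i, p₂q_i ∈ (0,1) for all i, and let X₁, X₂ be independent Z_N-indexed families of independent random variables with X₁(i) ~ Geom(p₁q_i) and X₂(i) ~ Geom(p₂q_i) (ℙ(X=n) = (pq)^n(1−pq) for n ≥ 0). Then the pair (X₁, X₂) has the same joint distribution as (T̃(X₁,X₂), D̃(X₁,X₂)), where T̃, D̃ are the zero-temperature periodic Pitman maps. -/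
/-!
Write `Y = Yv X₁ X₂` and `M i = max_j Y_(i,j]`. Then `D̃ i = X₂ (i+1) + M i - M (i-1)` and
`T̃ i + D̃ i = X₁ i + X₂ i`, so `(T̃, D̃)` preserves `∑ X₁`, `∑ X₂` and every `X₁ i + X₂ i`, which
is all that the product of geometric weights depends on. It remains to see that `(T̃, D̃)` is a
bijection of pairs of natural-number vectors: followed by the reflection `i ↦ -i` it is an
involution. This rests on the tropical identity
`max_k (Y_[k,m] - M (k-1) - M (k-2)) = Y m - M (m-1)`,
the `t → ∞` limit along `t • Y` of the exact identity
`∑_k exp Y_[k,m] / (V (k-1) V (k-2)) = exp (Y m) / V (m-1)`, where `V i = ∑_j exp Y_(i,j]`.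
The latter telescopes because `V (i-1) = 1 - exp (∑ Y) + exp (Y i) V i`; it needs `∑ Y ≠ 0`,
which a bounded perturbation of `t • Y` ensures without changing the limit.
-/

open Finset Real

variable {N : ℕ}

lemma abs_sum_range_sub_mul_le {α : Type*} {Y Z : α → ℝ} {t : ℝ}
    (hZ : ∀ l, |Z l - t * Y l| ≤ 1) (n : ℕ) (a : ℕ → α) :
    |∑ ℓ ∈ range n, Z (a ℓ) - t * ∑ ℓ ∈ range n, Y (a ℓ)| ≤ n := by
  rw [mul_sum, ← sum_sub_distrib]
  refine (abs_sum_le_sum_abs _ _).trans ?_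
  simpa using sum_le_sum fun ℓ (_ : ℓ ∈ range n) => hZ (a ℓ)

lemma abs_log_sum_exp_sub_mul_sup'_le {ι : Type*} [Fintype ι] [Nonempty ι] (g h : ι → ℝ)
    {t c : ℝ} (ht : 0 ≤ t) (hgh : ∀ k, |g k - t * h k| ≤ c) :
    |log (∑ k, exp (g k)) - t * univ.sup' univ_nonempty h| ≤ c + log (Fintype.card ι) := by
  have hsum : 0 < ∑ k, exp (g k) := sum_pos (fun k _ => exp_pos _) univ_nonempty
  obtain ⟨k₀, -, hk₀⟩ := exists_mem_eq_sup' univ_nonempty h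
  have hcard : 0 ≤ log (Fintype.card ι) := log_nonneg (by exact_mod_cast Fintype.card_pos)
  have hlower : g k₀ ≤ log (∑ k, exp (g k)) :=
    (le_log_iff_exp_le hsum).2 (single_le_sum (fun k _ => (exp_pos (g k)).le) (mem_univ k₀))
  have hupper : ∑ k, exp (g k) ≤ Fintype.card ι * exp (t * univ.sup' univ_nonempty h + c) := by
    rw [← nsmul_eq_mul, ← card_univ]
    refine sum_le_card_nsmul _ _ _ fun k _ => exp_le_exp.2 ?_
    have := mul_le_mul_of_nonneg_left (le_sup' h (mem_univ k)) ht
    linarith [(abs_le.1 (hgh k)).2]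
  have hupper' := log_le_log hsum hupper
  rw [log_mul (by positivity) (exp_pos _).ne', log_exp] at hupper'
  rw [hk₀] at hupper' ⊢
  rw [abs_le]
  constructor <;> linarith [(abs_le.1 (hgh k₀)).1]

lemma eq_of_forall_abs_sub_mul_le (f : ℝ → ℝ) {a b C : ℝ} (ha : ∀ t > 0, |f t - t * a| ≤ C)
    (hb : ∀ t > 0, |f t - t * b| ≤ C) : a = b := by
  by_contra hab
  have hd : 0 < |a - b| := abs_pos.2 (sub_ne_zero.2 hab)
  have hC : 0 ≤ C := (abs_nonneg _).trans (ha 1 one_pos)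
  set t := (2 * C + 1) / |a - b|
  have ht : 0 < t := by positivity
  have key : |t * (a - b)| ≤ 2 * C := by
    calc |t * (a - b)| = |(f t - t * b) - (f t - t * a)| := by ring_nf
      _ ≤ |f t - t * b| + |f t - t * a| := abs_sub _ _
      _ ≤ 2 * C := by linarith [ha t ht, hb t ht]
  rw [abs_mul, abs_of_pos ht, div_mul_cancel₀ _ hd.ne'] at key
  linarith

lemma Finset.sup'_univ_comp_equiv {ι α : Type*} [Fintype ι] [Nonempty ι] [SemilatticeSup α]
    (e : ι ≃ ι) (f : ι → α) :
    univ.sup' univ_nonempty (fun i => f (e i)) = univ.sup' univ_nonempty f :=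
  le_antisymm (sup'_le _ _ fun _ _ => le_sup' f (mem_univ _))
    (sup'_le _ _ fun i _ => by simpa using le_sup' (fun i => f (e i)) (mem_univ (e.symm i)))

lemma natCast_floor_eq_self {x : ℝ} (hx : x ∈ (Int.castRingHom ℝ).range) (h0 : 0 ≤ x) :
    (⌊x⌋₊ : ℝ) = x := by
  obtain ⟨z, rfl⟩ := hx
  rw [natCast_floor_eq_intCast_floor h0, eq_intCast, Int.floor_intCast]

section CyclicSums

variable [NeZero N] (Y : ZMod N → ℝ)

lemma ZMod.val_sub_one_add_one {x : ZMod N} (hx : x ≠ 0) : (x - 1).val + 1 = x.val := by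
  have hpos : 1 ≤ x.val := Nat.one_le_iff_ne_zero.2 ((ZMod.val_ne_zero x).2 hx)
  have hx1 : x - 1 = ((x.val - 1 : ℕ) : ZMod N) := by
    rw [Nat.cast_sub hpos, ZMod.natCast_zmod_val, Nat.cast_one]
  rw [hx1, ZMod.val_natCast_of_lt (by have := ZMod.val_lt x; omega)]
  omega

lemma cycOC_sub_one {i j : ZMod N} (h : j ≠ i - 1) : cycOC Y (i - 1) j = cycCC Y i j := by
  have hlen : (j - i).val + 1 = (j - (i - 1)).val := by
    rw [← ZMod.val_sub_one_add_one (sub_ne_zero.2 h), sub_sub, sub_add_cancel]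
  rw [cycOC, cycCC, sub_add_cancel, hlen]

lemma cycCC_sub_one (i : ZMod N) : cycCC Y i (i - 1) = ∑ l, Y l := by
  have hlen : (i - 1 - i).val + 1 = N := by
    have hN := NeZero.pos N
    have hneg : ((N - 1 : ℕ) : ZMod N) = -1 := by rw [Nat.cast_pred hN, ZMod.natCast_self, zero_sub]
    rw [sub_sub_cancel_left, ← hneg, ZMod.val_natCast_of_lt (Nat.sub_lt hN one_pos)]
    omega
  rw [cycCC, hlen]
  exact sum_nbij' (fun ℓ => i + ℓ) (fun l => (l - i).val) (fun _ _ => mem_univ _)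
    (fun _ _ => mem_range.2 (ZMod.val_lt _))
    (fun ℓ hℓ => by simp [ZMod.val_natCast_of_lt (mem_range.1 hℓ)])
    (fun _ _ => by simp) (fun _ _ => rfl)

lemma cycCC_comp_neg (i j : ZMod N) : cycCC (fun l => Y (-l)) i j = cycCC Y (-j) (-i) := by
  have hlen : (-i - -j).val = (j - i).val := by rw [neg_sub_neg]
  rw [cycCC, cycCC, hlen, ← sum_range_reflect]
  refine sum_congr rfl fun ℓ hℓ => congrArg Y ?_
  have hle : ℓ ≤ (j - i).val := Nat.lt_succ_iff.1 (mem_range.1 hℓ)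
  rw [Nat.add_sub_cancel, Nat.cast_sub hle, ZMod.natCast_zmod_val]
  ring

lemma cycCC_sub_comp_sub_one (h : ZMod N → ℝ) (i j : ZMod N) :
    cycCC (fun l => h l - h (l - 1)) i j = h j - h (i - 1) := by
  have hstep : ∀ ℓ : ℕ, h (i + ℓ) - h (i + ℓ - 1) = h (i + (ℓ + 1 : ℕ) - 1) - h (i + ℓ - 1) :=
    fun ℓ => by push_cast; ring_nf
  rw [cycCC, sum_congr rfl fun ℓ _ => hstep ℓ, sum_range_sub (fun ℓ : ℕ => h (i + ℓ - 1))]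
  simp only [Nat.cast_add, Nat.cast_one, ZMod.natCast_zmod_val, Nat.cast_zero, add_zero]
  congr 2
  ring

lemma cycCC_sub_comp_sub_two (h : ZMod N → ℝ) (i j : ZMod N) :
    cycCC (fun l => h l - h (l - 2)) i j = h j + h (j - 1) - h (i - 1) - h (i - 2) := by
  have htel : (fun l => h l - h (l - 2)) =
      fun l => (fun a => h a + h (a - 1)) l - (fun a => h a + h (a - 1)) (l - 1) := by
    funext l
    show _ = h l + h (l - 1) - (h (l - 1) + h (l - 1 - 1))
    rw [sub_sub l 1 1, one_add_one_eq_two]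
    ring
  rw [htel, cycCC_sub_comp_sub_one, sub_sub i 1 1, one_add_one_eq_two]
  ring

lemma cycCC_add (Z : ZMod N → ℝ) (i j : ZMod N) :
    cycCC (fun l => Y l + Z l) i j = cycCC Y i j + cycCC Z i j :=
  sum_add_distrib

end CyclicSums

section Perturbation

variable [NeZero N] {Y Z : ZMod N → ℝ} {t : ℝ}

lemma abs_cycCC_sub_mul_le (hZ : ∀ l, |Z l - t * Y l| ≤ 1) (i j : ZMod N) :
    |cycCC Z i j - t * cycCC Y i j| ≤ N :=
  (abs_sum_range_sub_mul_le hZ _ _).trans (by exact_mod_cast ZMod.val_lt (j - i))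

lemma abs_cycOC_sub_mul_le (hZ : ∀ l, |Z l - t * Y l| ≤ 1) (i j : ZMod N) :
    |cycOC Z i j - t * cycOC Y i j| ≤ N :=
  (abs_sum_range_sub_mul_le hZ _ _).trans (by exact_mod_cast (ZMod.val_lt (j - i)).le)

lemma exists_abs_sub_le_one_sum_ne_zero (Y : ZMod N → ℝ) :
    ∃ Z : ZMod N → ℝ, (∀ l, |Z l - Y l| ≤ 1) ∧ ∑ l, Z l ≠ 0 := by
  by_cases hY : ∑ l, Y l = 0
  · refine ⟨fun l => Y l + (Pi.single 0 1 : ZMod N → ℝ) l, fun l => ?_,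
      by simp [sum_add_distrib, hY]⟩
    rcases eq_or_ne l 0 with rfl | hl <;> simp [*]
  · exact ⟨Y, by simp, hY⟩

end Perturbation

section PositiveTemperature

variable [NeZero N] (Y : ZMod N → ℝ)

noncomputable def sumExpCycOC (i : ZMod N) : ℝ := ∑ j, exp (cycOC Y i j)

lemma sumExpCycOC_pos (i : ZMod N) : 0 < sumExpCycOC Y i :=
  sum_pos (fun _ _ => exp_pos _) univ_nonempty

lemma sumExpCycOC_sub_one (i : ZMod N) :
    sumExpCycOC Y (i - 1) = 1 - exp (∑ l, Y l) + exp (Y i) * sumExpCycOC Y i := by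
  have hstep : ∀ j ∈ univ.erase (i - 1),
      exp (cycOC Y (i - 1) j) = exp (Y i) * exp (cycOC Y i j) := fun j hj => by
    rw [cycOC_sub_one Y (ne_of_mem_erase hj), cycCC_eq_add_cycOC, exp_add]
  have hfull : exp (Y i) * exp (cycOC Y i (i - 1)) = exp (∑ l, Y l) := by
    rw [← exp_add, ← cycCC_eq_add_cycOC, cycCC_sub_one]
  rw [sumExpCycOC, sumExpCycOC, ← add_sum_erase _ _ (mem_univ (i - 1)), sum_congr rfl hstep,
    ← mul_sum, cycOC_self, exp_zero,
    ← add_sum_erase univ (fun j => exp (cycOC Y i j)) (mem_univ (i - 1))]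
  linear_combination (-1 : ℝ) * hfull

theorem sum_exp_cycCC_div_sumExpCycOC (hS : ∑ l, Y l ≠ 0) (m : ZMod N) :
    ∑ k, exp (cycCC Y k m) / (sumExpCycOC Y (k - 1) * sumExpCycOC Y (k - 2)) =
      exp (Y m) / sumExpCycOC Y (m - 1) := by
  set V := sumExpCycOC Y
  set E := exp (∑ l, Y l)
  have hE : 1 - E ≠ 0 := by
    rw [sub_ne_zero, ne_comm, Ne, exp_eq_one_iff]
    exact hS
  let u k := exp (cycCC Y k m) / V (k - 1)
  have hterm : ∀ k, (1 - E) * (exp (cycCC Y k m) / (V (k - 1) * V (k - 2))) =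
      u k - u (k - 1) + if k = m + 1 then (1 - E) * (exp (Y m) / V (m - 1)) else 0 := by
    intro k
    have hV1 : 0 < V (k - 1) := sumExpCycOC_pos Y _
    have hV2 : 0 < V (k - 2) := sumExpCycOC_pos Y _
    have hrec : V (k - 2) = 1 - E + exp (Y (k - 1)) * V (k - 1) := by
      rw [← sumExpCycOC_sub_one, sub_sub, one_add_one_eq_two]
    split_ifs with hk
    · subst hk
      have h1 : m + 1 - 1 = m := add_sub_cancel_right m 1
      have h2 : m + 1 - 2 = m - 1 := by ring
      have hfull : cycCC Y (m + 1) m = ∑ l, Y l := by simpa only [h1] using cycCC_sub_one Y (m + 1)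
      have hself : cycCC Y m m = Y m := by rw [cycCC_eq_add_cycOC, cycOC_self, add_zero]
      simp only [u, h1, h2, hfull, hself] at hrec hV1 hV2 ⊢
      field_simp
      rw [hrec]
      ring
    · have hm : m ≠ k - 1 := fun h => hk (by rw [h, sub_add_cancel])
      simp only [u, sub_sub, one_add_one_eq_two, cycCC_eq_add_cycOC Y (k - 1), cycOC_sub_one Y hm]
      rw [exp_add]
      field_simp
      rw [hrec]
      ring
  have htel : ∑ k, (u k - u (k - 1)) = 0 := by
    rw [sum_sub_distrib, sub_eq_zero]
    exact ((Equiv.subRight (1 : ZMod N)).sum_comp u).symm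
  apply mul_left_cancel₀ hE
  rw [mul_sum, sum_congr rfl fun k _ => hterm k, sum_add_distrib, htel, zero_add,
    sum_ite_eq' univ (m + 1), if_pos (mem_univ _)]

end PositiveTemperature

section TropicalLimit

variable [NeZero N] (Y : ZMod N → ℝ)

noncomputable def maxCycOC (i : ZMod N) : ℝ := univ.sup' univ_nonempty (cycOC Y i)

noncomputable def maxCycCC (i : ZMod N) : ℝ := univ.sup' univ_nonempty (cycCC Y i)

lemma maxCycCC_eq_add_maxCycOC (i : ZMod N) : maxCycCC Y i = Y i + maxCycOC Y i := by
  rw [maxCycOC, add_sup']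
  exact sup'_congr _ rfl fun j _ => cycCC_eq_add_cycOC Y i j

lemma maxCycOC_nonneg (i : ZMod N) : 0 ≤ maxCycOC Y i :=
  cycOC_self Y i ▸ le_sup' _ (mem_univ i)

lemma abs_log_sumExpCycOC_sub_mul_le {Z : ZMod N → ℝ} {t : ℝ} (ht : 0 < t)
    (hZ : ∀ l, |Z l - t * Y l| ≤ 1) (i : ZMod N) :
    |log (sumExpCycOC Z i) - t * maxCycOC Y i| ≤ N + log N := by
  have h :=
    abs_log_sum_exp_sub_mul_sup'_le (cycOC Z i) (cycOC Y i) ht.le (abs_cycOC_sub_mul_le hZ i)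
  rwa [ZMod.card] at h

theorem sup'_cycCC_sub_maxCycOC (m : ZMod N) :
    univ.sup' univ_nonempty (fun k => cycCC Y k m - maxCycOC Y (k - 1) - maxCycOC Y (k - 2)) =
      Y m - maxCycOC Y (m - 1) := by
  choose Z hZ hZS using fun t : ℝ => exists_abs_sub_le_one_sum_ne_zero (fun l => t * Y l)
  have hK : 0 ≤ (N : ℝ) + log N :=
    add_nonneg (Nat.cast_nonneg N) (log_nonneg (by exact_mod_cast NeZero.one_le))
  refine eq_of_forall_abs_sub_mul_le (fun t => Z t m - log (sumExpCycOC (Z t) (m - 1)))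
    (C := 3 * (N + log N) + 1) (fun t ht => ?_) (fun t ht => ?_)
  · have hV := abs_log_sumExpCycOC_sub_mul_le Y ht (hZ t)
    have hid : log (∑ k, exp (cycCC (Z t) k m - log (sumExpCycOC (Z t) (k - 1))
        - log (sumExpCycOC (Z t) (k - 2)))) = Z t m - log (sumExpCycOC (Z t) (m - 1)) := by
      rw [← log_exp (Z t m - _), exp_sub, exp_log (sumExpCycOC_pos _ _),
        ← sum_exp_cycCC_div_sumExpCycOC _ (hZS t) m]
      refine congrArg log (sum_congr rfl fun k _ => ?_)
      rw [exp_sub, exp_sub, exp_log (sumExpCycOC_pos _ _), exp_log (sumExpCycOC_pos _ _), div_div]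
    have hsum := abs_log_sum_exp_sub_mul_sup'_le
      (fun k => cycCC (Z t) k m - log (sumExpCycOC (Z t) (k - 1)) - log (sumExpCycOC (Z t) (k - 2)))
      (fun k => cycCC Y k m - maxCycOC Y (k - 1) - maxCycOC Y (k - 2)) ht.le
      (c := N + 2 * (N + log N)) fun k => by
        have h₁ := abs_le.1 (abs_cycCC_sub_mul_le (hZ t) k m)
        have h₂ := abs_le.1 (hV (k - 1))
        have h₃ := abs_le.1 (hV (k - 2))
        exact abs_le.2 ⟨by linarith, by linarith⟩
    rw [hid, ZMod.card] at hsum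
    linarith
  · have h₁ := abs_le.1 (hZ t m)
    have h₂ := abs_le.1 (abs_log_sumExpCycOC_sub_mul_le Y ht (hZ t) (m - 1))
    exact abs_le.2 ⟨by linarith, by linarith⟩

lemma maxCycOC_sub_one_le_max_add (i : ZMod N) :
    maxCycOC Y (i - 1) ≤ max 0 (Y i) + maxCycOC Y i :=
  sup'_le _ _ fun j _ => by
    rcases eq_or_ne j (i - 1) with rfl | hj
    · rw [cycOC_self]
      exact add_nonneg (le_max_left _ _) (maxCycOC_nonneg Y i)
    · rw [cycOC_sub_one Y hj, cycCC_eq_add_cycOC]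
      exact add_le_add (le_max_right _ _) (le_sup' _ (mem_univ j))

lemma maxCycCC_le_max_add_maxCycOC (i : ZMod N) :
    maxCycCC Y i ≤ max 0 (Y (i - 1)) + maxCycOC Y (i - 1) :=
  sup'_le _ _ fun j _ => by
    rcases eq_or_ne j (i - 1) with rfl | hj
    · rw [cycCC_sub_one, ← cycCC_sub_one Y (i - 1), cycCC_eq_add_cycOC]
      exact add_le_add (le_max_right _ _) (le_sup' _ (mem_univ _))
    · rw [← cycOC_sub_one Y hj]
      exact le_add_of_nonneg_of_le (le_max_left _ _) (le_sup' _ (mem_univ j))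

variable {Y}

lemma maxCycCC_mem_range (hY : ∀ l, Y l ∈ (Int.castRingHom ℝ).range)
    (i : ZMod N) : maxCycCC Y i ∈ (Int.castRingHom ℝ).range :=
  sup'_mem _ (fun x hx y hy => sup_ind x y hx hy) _ _ _ fun _ _ => sum_mem fun _ _ => hY _

lemma maxCycOC_mem_range (hY : ∀ l, Y l ∈ (Int.castRingHom ℝ).range)
    (i : ZMod N) : maxCycOC Y i ∈ (Int.castRingHom ℝ).range :=
  sup'_mem _ (fun x hx y hy => sup_ind x y hx hy) _ _ _ fun _ _ => sum_mem fun _ _ => hY _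

end TropicalLimit

section PitmanMaps

variable [NeZero N] (X₁ X₂ : ZMod N → ℝ)

lemma Dz_eq (i : ZMod N) :
    Dz X₁ X₂ i = X₂ (i + 1) + maxCycOC (Yv X₁ X₂) i - maxCycOC (Yv X₁ X₂) (i - 1) := rfl

lemma Dz_sub_one (i : ZMod N) :
    Dz X₁ X₂ (i - 1) = X₂ i + maxCycOC (Yv X₁ X₂) (i - 1) - maxCycOC (Yv X₁ X₂) (i - 2) := by
  rw [Dz_eq, sub_add_cancel, sub_sub, one_add_one_eq_two]

lemma Tz_eq (i : ZMod N) :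
    Tz X₁ X₂ i = X₂ i + maxCycOC (Yv X₁ X₂) (i - 1) - maxCycCC (Yv X₁ X₂) i := by
  have h := maxCycCC_eq_add_maxCycOC (Yv X₁ X₂) (i - 1)
  have hY : Yv X₁ X₂ (i - 1) = X₂ i - X₁ (i - 1) := by rw [Yv, sub_add_cancel]
  change X₁ (i - 1) + maxCycCC _ (i - 1) - maxCycCC _ i = _
  linarith

lemma Tz_add_Dz (i : ZMod N) : Tz X₁ X₂ i + Dz X₁ X₂ i = X₁ i + X₂ i := by
  have h := maxCycCC_eq_add_maxCycOC (Yv X₁ X₂) i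
  have hY : Yv X₁ X₂ i = X₂ (i + 1) - X₁ i := rfl
  rw [Tz_eq, Dz_eq]
  linarith

lemma sum_Tz : ∑ i, Tz X₁ X₂ i = ∑ i, X₁ i := by
  have hshift : ∑ i, (X₁ (i - 1) + maxCycCC (Yv X₁ X₂) (i - 1)) =
      ∑ i, (X₁ i + maxCycCC (Yv X₁ X₂) i) :=
    (Equiv.subRight (1 : ZMod N)).sum_comp fun a => X₁ a + maxCycCC (Yv X₁ X₂) a
  change ∑ i, (X₁ (i - 1) + maxCycCC _ (i - 1) - maxCycCC _ i) = _
  rw [sum_sub_distrib, hshift, sum_add_distrib, add_sub_cancel_right]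

lemma sum_Dz : ∑ i, Dz X₁ X₂ i = ∑ i, X₂ i := by
  have h := sum_congr rfl fun i (_ : i ∈ univ) => Tz_add_Dz X₁ X₂ i
  rw [sum_add_distrib, sum_add_distrib, sum_Tz] at h
  exact add_left_cancel h

lemma Yv_Tz_Dz_comp_neg (ℓ : ZMod N) :
    Yv (fun k => Tz X₁ X₂ (-k)) (fun k => Dz X₁ X₂ (-k)) ℓ =
      Yv X₁ X₂ (-ℓ) + (maxCycOC (Yv X₁ X₂) (-ℓ) - maxCycOC (Yv X₁ X₂) (-ℓ - 2)) := by
  have hT := Tz_add_Dz X₁ X₂ (-ℓ)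
  have hY : Yv X₁ X₂ (-ℓ) = X₂ (-ℓ + 1) - X₁ (-ℓ) := rfl
  change Dz X₁ X₂ (-(ℓ + 1)) - Tz X₁ X₂ (-ℓ) = _
  rw [neg_add', Dz_sub_one]
  rw [Dz_eq] at hT
  linarith

lemma maxCycCC_Yv_Tz_Dz_comp_neg (i : ZMod N) :
    maxCycCC (Yv (fun k => Tz X₁ X₂ (-k)) (fun k => Dz X₁ X₂ (-k))) i =
      maxCycCC (Yv X₁ X₂) (-i) := by
  set Y := Yv X₁ X₂
  set M := maxCycOC Y
  have hYhat : Yv (fun k => Tz X₁ X₂ (-k)) (fun k => Dz X₁ X₂ (-k)) =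
      fun ℓ => (fun a => Y a + (M a - M (a - 2))) (-ℓ) :=
    funext (Yv_Tz_Dz_comp_neg X₁ X₂)
  have hcyc : ∀ j, cycCC (fun a => Y a + (M a - M (a - 2))) (-j) (-i) =
      M (-i) + M (-i - 1) + (cycCC Y (-j) (-i) - M (-j - 1) - M (-j - 2)) := fun j => by
    rw [cycCC_add, cycCC_sub_comp_sub_two]
    ring
  have hneg : univ.sup' univ_nonempty (fun j => cycCC Y (-j) (-i) - M (-j - 1) - M (-j - 2)) =
      univ.sup' univ_nonempty (fun k => cycCC Y k (-i) - M (k - 1) - M (k - 2)) :=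
    sup'_univ_comp_equiv (Equiv.neg (ZMod N)) fun k => cycCC Y k (-i) - M (k - 1) - M (k - 2)
  rw [maxCycCC, hYhat, sup'_congr _ rfl fun j _ =>
    (cycCC_comp_neg (fun a => Y a + (M a - M (a - 2))) i j).trans (hcyc j), ← add_sup', hneg,
    sup'_cycCC_sub_maxCycOC, maxCycCC_eq_add_maxCycOC]
  ring

lemma maxCycOC_Yv_Tz_Dz_comp_neg (i : ZMod N) :
    maxCycOC (Yv (fun k => Tz X₁ X₂ (-k)) (fun k => Dz X₁ X₂ (-k))) i =
      maxCycOC (Yv X₁ X₂) (-i - 2) := by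
  have h₁ := maxCycCC_eq_add_maxCycOC (Yv (fun k => Tz X₁ X₂ (-k)) (fun k => Dz X₁ X₂ (-k))) i
  have h₂ := maxCycCC_eq_add_maxCycOC (Yv X₁ X₂) (-i)
  rw [maxCycCC_Yv_Tz_Dz_comp_neg, Yv_Tz_Dz_comp_neg] at h₁
  linarith

theorem Dz_Tz_Dz_comp_neg (i : ZMod N) :
    Dz (fun k => Tz X₁ X₂ (-k)) (fun k => Dz X₁ X₂ (-k)) i = X₂ (-i) := by
  have h : -(i - 1) - 2 = -i - 1 := by ring
  rw [Dz_eq, maxCycOC_Yv_Tz_Dz_comp_neg, maxCycOC_Yv_Tz_Dz_comp_neg, h, neg_add', Dz_sub_one]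
  ring

theorem Tz_Tz_Dz_comp_neg (i : ZMod N) :
    Tz (fun k => Tz X₁ X₂ (-k)) (fun k => Dz X₁ X₂ (-k)) i = X₁ (-i) := by
  have h := Tz_add_Dz (fun k => Tz X₁ X₂ (-k)) (fun k => Dz X₁ X₂ (-k)) i
  rw [Dz_Tz_Dz_comp_neg] at h
  linarith [Tz_add_Dz X₁ X₂ (-i)]

variable {X₁ X₂}

lemma Tz_nonneg (h₁ : ∀ i, 0 ≤ X₁ i) (h₂ : ∀ i, 0 ≤ X₂ i) (i : ZMod N) : 0 ≤ Tz X₁ X₂ i := by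
  have hY : Yv X₁ X₂ (i - 1) = X₂ i - X₁ (i - 1) := by rw [Yv, sub_add_cancel]
  have hmax : max 0 (Yv X₁ X₂ (i - 1)) ≤ X₂ i := max_le (h₂ i) (by linarith [h₁ (i - 1)])
  rw [Tz_eq]
  linarith [maxCycCC_le_max_add_maxCycOC (Yv X₁ X₂) i]

lemma Dz_nonneg (h₁ : ∀ i, 0 ≤ X₁ i) (h₂ : ∀ i, 0 ≤ X₂ i) (i : ZMod N) : 0 ≤ Dz X₁ X₂ i := by
  have hY : Yv X₁ X₂ i = X₂ (i + 1) - X₁ i := rfl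
  have hmax : max 0 (Yv X₁ X₂ i) ≤ X₂ (i + 1) := max_le (h₂ _) (by linarith [h₁ i])
  rw [Dz_eq]
  linarith [maxCycOC_sub_one_le_max_add (Yv X₁ X₂) i]

lemma Tz_mem_range (h₁ : ∀ i, X₁ i ∈ (Int.castRingHom ℝ).range)
    (h₂ : ∀ i, X₂ i ∈ (Int.castRingHom ℝ).range) (i : ZMod N) :
    Tz X₁ X₂ i ∈ (Int.castRingHom ℝ).range :=
  have hY l : Yv X₁ X₂ l ∈ (Int.castRingHom ℝ).range := sub_mem (h₂ _) (h₁ _)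
  sub_mem (add_mem (h₁ _) (maxCycCC_mem_range hY _)) (maxCycCC_mem_range hY _)

lemma Dz_mem_range (h₁ : ∀ i, X₁ i ∈ (Int.castRingHom ℝ).range)
    (h₂ : ∀ i, X₂ i ∈ (Int.castRingHom ℝ).range) (i : ZMod N) :
    Dz X₁ X₂ i ∈ (Int.castRingHom ℝ).range :=
  have hY l : Yv X₁ X₂ l ∈ (Int.castRingHom ℝ).range := sub_mem (h₂ _) (h₁ _)
  sub_mem (add_mem (h₂ _) (maxCycOC_mem_range hY _)) (maxCycOC_mem_range hY _)

end PitmanMaps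

abbrev NatPair (N : ℕ) := (ZMod N → ℕ) × (ZMod N → ℕ)

namespace NatPair

def toReal (x : NatPair N) : (ZMod N → ℝ) × (ZMod N → ℝ) :=
  (fun i => (x.1 i : ℝ), fun i => (x.2 i : ℝ))

def reverse (x : NatPair N) : NatPair N := (fun i => x.1 (-i), fun i => x.2 (-i))

lemma toReal_reverse (x : NatPair N) :
    x.reverse.toReal = (fun i => x.toReal.1 (-i), fun i => x.toReal.2 (-i)) := rfl

lemma toReal_injective : Function.Injective (toReal (N := N)) := fun _ _ h =>
  Prod.ext (funext fun i => Nat.cast_injective (congrFun (congrArg Prod.fst h) i))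
    (funext fun i => Nat.cast_injective (congrFun (congrArg Prod.snd h) i))

@[simp]
lemma reverse_reverse (x : NatPair N) : x.reverse.reverse = x := by
  simp [reverse]

variable [NeZero N]

-- The floors are exact: see `toReal_pitman`.
noncomputable def pitman (x : NatPair N) : NatPair N :=
  (fun i => ⌊Tz x.toReal.1 x.toReal.2 i⌋₊, fun i => ⌊Dz x.toReal.1 x.toReal.2 i⌋₊)

lemma toReal_pitman (x : NatPair N) :
    x.pitman.toReal = (Tz x.toReal.1 x.toReal.2, Dz x.toReal.1 x.toReal.2) := by
  have h₁ i : 0 ≤ x.toReal.1 i := Nat.cast_nonneg _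
  have h₂ i : 0 ≤ x.toReal.2 i := Nat.cast_nonneg _
  have hℤ₁ i : x.toReal.1 i ∈ (Int.castRingHom ℝ).range := ⟨x.1 i, by simp [toReal]⟩
  have hℤ₂ i : x.toReal.2 i ∈ (Int.castRingHom ℝ).range := ⟨x.2 i, by simp [toReal]⟩
  refine Prod.ext (funext fun i => ?_) (funext fun i => ?_)
  · exact natCast_floor_eq_self (Tz_mem_range hℤ₁ hℤ₂ i) (Tz_nonneg h₁ h₂ i)
  · exact natCast_floor_eq_self (Dz_mem_range hℤ₁ hℤ₂ i) (Dz_nonneg h₁ h₂ i)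

lemma pitman_reverse_pitman (x : NatPair N) : x.pitman.reverse.pitman = x.reverse := by
  apply toReal_injective
  rw [toReal_pitman, toReal_reverse, toReal_pitman, toReal_reverse]
  exact Prod.ext (funext (Tz_Tz_Dz_comp_neg _ _)) (funext (Dz_Tz_Dz_comp_neg _ _))

lemma sum_pitman_fst (x : NatPair N) : ∑ i, x.pitman.1 i = ∑ i, x.1 i := by
  have h := congrArg (fun y => ∑ i, y.1 i) (toReal_pitman x)
  simp only [toReal, sum_Tz] at h
  exact_mod_cast h

lemma sum_pitman_snd (x : NatPair N) : ∑ i, x.pitman.2 i = ∑ i, x.2 i := by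
  have h := congrArg (fun y => ∑ i, y.2 i) (toReal_pitman x)
  simp only [toReal, sum_Dz] at h
  exact_mod_cast h

lemma pitman_fst_add_snd (x : NatPair N) (i : ZMod N) :
    x.pitman.1 i + x.pitman.2 i = x.1 i + x.2 i := by
  have h := congrArg (fun y => y.1 i + y.2 i) (toReal_pitman x)
  simp only [toReal, Tz_add_Dz] at h
  exact_mod_cast h

noncomputable def pitmanEquiv : NatPair N ≃ NatPair N where
  toFun := pitman
  invFun y := y.reverse.pitman.reverse
  left_inv x := by simp only [pitman_reverse_pitman, reverse_reverse]
  right_inv y := by simp only [pitman_reverse_pitman, reverse_reverse]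

@[simp]
lemma pitmanEquiv_apply (x : NatPair N) : pitmanEquiv x = x.pitman := rfl

end NatPair

section GeometricWeights

variable [NeZero N] (p₁ p₂ : ℝ) (q : ZMod N → ℝ)

def geomWeight (x : NatPair N) : ℝ :=
  (∏ i, (p₁ * q i) ^ x.1 i * (1 - p₁ * q i)) * ∏ i, (p₂ * q i) ^ x.2 i * (1 - p₂ * q i)

lemma geomWeight_eq (x : NatPair N) :
    geomWeight p₁ p₂ q x = (∏ i, (1 - p₁ * q i) * (1 - p₂ * q i)) * p₁ ^ (∑ i, x.1 i) *
      p₂ ^ (∑ i, x.2 i) * ∏ i, q i ^ (x.1 i + x.2 i) := by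
  simp only [geomWeight, mul_pow, pow_add, prod_mul_distrib, prod_pow_eq_pow_sum]
  ring

lemma geomWeight_pitman (x : NatPair N) : geomWeight p₁ p₂ q x.pitman = geomWeight p₁ p₂ q x := by
  simp only [geomWeight_eq, NatPair.sum_pitman_fst, NatPair.sum_pitman_snd,
    NatPair.pitman_fst_add_snd]

end GeometricWeights

open MeasureTheory ProbabilityTheory

lemma MeasureTheory.Measure.map_equiv_eq_self {α : Type*} [MeasurableSpace α] [Countable α]
    [MeasurableSingletonClass α] (ν : Measure α) (e : α ≃ α) (h : ∀ x, ν {e x} = ν {x}) :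
    ν.map e = ν := by
  refine Measure.ext_iff_singleton.2 fun y => ?_
  have hpre : e ⁻¹' {y} = {e.symm y} := by
    ext x
    simp [Equiv.eq_symm_apply]
  rw [Measure.map_apply (measurable_of_countable e) (measurableSet_singleton y), hpre, ← h,
    e.apply_symm_apply]

lemma map_prodMk_apply_singleton_of_iIndepFun {ι Ω : Type*} [Fintype ι] [MeasurableSpace Ω]
    (μ : Measure Ω) {X₁ X₂ : ι → Ω → ℕ} (hm₁ : ∀ i, Measurable (X₁ i))
    (hm₂ : ∀ i, Measurable (X₂ i)) (hindep : iIndepFun (Sum.elim X₁ X₂) μ)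
    (x : (ι → ℕ) × (ι → ℕ)) :
    μ.map (fun ω => (fun i => X₁ i ω, fun i => X₂ i ω)) {x} =
      (∏ i, μ {ω | X₁ i ω = x.1 i}) * ∏ i, μ {ω | X₂ i ω = x.2 i} := by
  have hpre : (fun ω => (fun i => X₁ i ω, fun i => X₂ i ω)) ⁻¹' {x} =
      ⋂ k ∈ (univ : Finset (ι ⊕ ι)), Sum.elim X₁ X₂ k ⁻¹' {Sum.elim x.1 x.2 k} := by
    ext ω
    simp [Prod.ext_iff, funext_iff]
  rw [Measure.map_apply ((measurable_pi_lambda _ hm₁).prodMk (measurable_pi_lambda _ hm₂))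
    (measurableSet_singleton x), hpre,
    hindep.measure_inter_preimage_eq_mul _ fun _ _ => measurableSet_singleton _,
    Fintype.prod_sum_type]
  rfl

theorem geometric_burke_property_general [NeZero N] {Ω : Type*} [MeasurableSpace Ω]
    (μ : Measure Ω)
    (p₁ p₂ : ℝ) (q : ZMod N → ℝ)
    (h1 : ∀ i, 0 < p₁ * q i ∧ p₁ * q i < 1)
    (h2 : ∀ i, 0 < p₂ * q i ∧ p₂ * q i < 1)
    (X₁ X₂ : ZMod N → Ω → ℕ)
    (hm1 : ∀ i, Measurable (X₁ i)) (hm2 : ∀ i, Measurable (X₂ i))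
    (hindep : iIndepFun (Sum.elim X₁ X₂) μ)
    (hgeom1 : ∀ i n, μ {ω | X₁ i ω = n} =
      ENNReal.ofReal ((p₁ * q i) ^ n * (1 - p₁ * q i)))
    (hgeom2 : ∀ i n, μ {ω | X₂ i ω = n} =
      ENNReal.ofReal ((p₂ * q i) ^ n * (1 - p₂ * q i))) :
    μ.map (fun ω => ((fun i => (X₁ i ω : ℝ)), (fun i => (X₂ i ω : ℝ)))) =
      μ.map (fun ω =>
        (Tz (fun i => (X₁ i ω : ℝ)) (fun i => (X₂ i ω : ℝ)),
         Dz (fun i => (X₁ i ω : ℝ)) (fun i => (X₂ i ω : ℝ)))) := by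
  set S : Ω → NatPair N := fun ω => (fun i => X₁ i ω, fun i => X₂ i ω)
  have hS : Measurable S := (measurable_pi_lambda _ hm1).prodMk (measurable_pi_lambda _ hm2)
  have hnn {p : ℝ} (h : ∀ i, 0 < p * q i ∧ p * q i < 1) (i : ZMod N) (n : ℕ) :
      0 ≤ (p * q i) ^ n * (1 - p * q i) :=
    mul_nonneg (pow_nonneg (h i).1.le n) (sub_nonneg.2 (h i).2.le)
  have hlaw (x : NatPair N) : μ.map S {x} = ENNReal.ofReal (geomWeight p₁ p₂ q x) := by
    rw [map_prodMk_apply_singleton_of_iIndepFun μ hm1 hm2 hindep, geomWeight,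
      ENNReal.ofReal_mul (prod_nonneg fun i _ => hnn h1 i _),
      ENNReal.ofReal_prod_of_nonneg fun i _ => hnn h1 i _,
      ENNReal.ofReal_prod_of_nonneg fun i _ => hnn h2 i _]
    simp only [hgeom1, hgeom2]
  have hinv : (μ.map S).map NatPair.pitmanEquiv = μ.map S :=
    Measure.map_equiv_eq_self _ _ fun x => by
      rw [hlaw, hlaw, NatPair.pitmanEquiv_apply, geomWeight_pitman]
  have hmeas : Measurable (NatPair.toReal (N := N)) := measurable_of_countable _
  calc μ.map (NatPair.toReal ∘ S) = ((μ.map S).map NatPair.pitmanEquiv).map NatPair.toReal := by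
        rw [hinv, Measure.map_map hmeas hS]
    _ = μ.map (NatPair.toReal ∘ NatPair.pitman ∘ S) := by
        rw [Measure.map_map hmeas (measurable_of_countable _), Measure.map_map
          (hmeas.comp (measurable_of_countable _)) hS]
        rfl
    _ = _ := by simp only [Function.comp_def, NatPair.toReal_pitman]; rfl

/-- Geometric Burke property: for independent geometric random variables
`X₁(i) ~ Geom(p₁qᵢ)`, `X₂(i) ~ Geom(p₂qᵢ)`, the pair `(X₁, X₂)` has the same joint law
as its zero-temperature periodic Pitman transform `(T̃(X₁,X₂), D̃(X₁,X₂))`. -/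
theorem geometric_burke_property [NeZero N] {Ω : Type*} [MeasurableSpace Ω]
    (μ : Measure Ω) [IsProbabilityMeasure μ]
    (p₁ p₂ : ℝ) (q : ZMod N → ℝ)
    (hq : ∀ i, 0 < q i ∧ q i ≤ 1)
    (h1 : ∀ i, 0 < p₁ * q i ∧ p₁ * q i < 1)
    (h2 : ∀ i, 0 < p₂ * q i ∧ p₂ * q i < 1)
    (X₁ X₂ : ZMod N → Ω → ℕ)
    (hm1 : ∀ i, Measurable (X₁ i)) (hm2 : ∀ i, Measurable (X₂ i))
    (hindep : iIndepFun (Sum.elim X₁ X₂) μ)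
    (hgeom1 : ∀ i n, μ {ω | X₁ i ω = n} =
      ENNReal.ofReal ((p₁ * q i) ^ n * (1 - p₁ * q i)))
    (hgeom2 : ∀ i n, μ {ω | X₂ i ω = n} =
      ENNReal.ofReal ((p₂ * q i) ^ n * (1 - p₂ * q i))) :
    μ.map (fun ω => ((fun i => (X₁ i ω : ℝ)), (fun i => (X₂ i ω : ℝ)))) =
      μ.map (fun ω =>
        (Tz (fun i => (X₁ i ω : ℝ)) (fun i => (X₂ i ω : ℝ)),
         Dz (fun i => (X₁ i ω : ℝ)) (fun i => (X₂ i ω : ℝ)))) :=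
  geometric_burke_property_general μ p₁ p₂ q h1 h2 X₁ X₂ hm1 hm2 hindep hgeom1 hgeom2
end

section
/- Let σ : ℤ → ℤ be a permutation fixing all but finitely many integers, written as a product of adjacent transpositions σ = (k_m, k_m+1)···(k_1, k_1+1) with the minimal number m of factors. If x ∈ ℤ satisfies σ(ℤ_{<x}) = ℤ_{<x}, then x ≠ k_ℓ + 1 for all 1 ≤ ℓ ≤ m; and if σ(ℤ_{>x}) = ℤ_{>x}, then x ≠ k_ℓ for all 1 ≤ ℓ ≤ m. -/
open Equiv

private def mdafc_invSet (σ : Equiv.Perm ℤ) : Set (ℤ × ℤ) :=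
  {p | p.1 < p.2 ∧ σ p.2 < σ p.1}

private def mdafc_FS (σ : Equiv.Perm ℤ) : Prop := {n : ℤ | σ n ≠ n}.Finite

private lemma mdafc_FS_one : mdafc_FS 1 := by
  simp [mdafc_FS]

private lemma mdafc_FS_mul {σ τ : Equiv.Perm ℤ} (h1 : mdafc_FS σ) (h2 : mdafc_FS τ) :
    mdafc_FS (σ * τ) := by
  apply (h1.union h2).subset
  intro n hn
  by_contra hc
  simp only [Set.mem_union, Set.mem_setOf_eq, not_or, not_not] at hc
  apply hn
  simp [Equiv.Perm.mul_apply, hc.2, hc.1]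

private lemma mdafc_FS_swap (k : ℤ) : mdafc_FS (Equiv.swap k (k+1)) := by
  apply ((Set.finite_singleton (k+1)).insert k).subset
  intro n hn
  simp only [Set.mem_setOf_eq] at hn
  by_contra hc
  simp only [Set.mem_insert_iff, Set.mem_singleton_iff, not_or] at hc
  exact hn (Equiv.swap_apply_of_ne_of_ne hc.1 hc.2)

private lemma mdafc_FS_prod (ks : List ℤ) :
    mdafc_FS ((ks.map fun k => Equiv.swap k (k + 1)).prod) := by
  induction ks with
  | nil => simpa using mdafc_FS_one
  | cons k ks ih =>
      simp only [List.map_cons, List.prod_cons]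
      exact mdafc_FS_mul (mdafc_FS_swap k) ih

private lemma mdafc_invSet_finite (σ : Equiv.Perm ℤ) (h : mdafc_FS σ) :
    (mdafc_invSet σ).Finite := by
  set T : Set ℤ := ⋃ a ∈ {n : ℤ | σ n ≠ n}, ⋃ b ∈ {n : ℤ | σ n ≠ n}, Set.Icc a b with hT
  have hTfin : T.Finite := h.biUnion fun a _ => h.biUnion fun b _ => Set.finite_Icc a b
  have hsupp : ∀ a : ℤ, σ a ≠ a → a ∈ T := by
    intro a ha
    refine Set.mem_biUnion ha (Set.mem_biUnion ha ?_)
    exact Set.mem_Icc.2 ⟨le_refl a, le_refl a⟩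
  have hmemT : ∀ a b, σ a ≠ a → a ≤ b → b ≤ σ a → b ∈ T := by
    intro a b ha h1 h2
    have hsa : σ (σ a) ≠ σ a := fun hc => ha (σ.injective hc)
    exact Set.mem_biUnion ha (Set.mem_biUnion hsa (Set.mem_Icc.2 ⟨h1, h2⟩))
  have hmemT' : ∀ a b, σ b ≠ b → σ b ≤ a → a ≤ b → a ∈ T := by
    intro a b hb h1 h2
    have hsb : σ (σ b) ≠ σ b := fun hc => hb (σ.injective hc)
    exact Set.mem_biUnion hsb (Set.mem_biUnion hb (Set.mem_Icc.2 ⟨h1, h2⟩))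
  apply (hTfin.prod hTfin).subset
  rintro ⟨a, b⟩ hab'
  obtain ⟨hab, hinv⟩ : a < b ∧ σ b < σ a := hab'
  simp only [Set.mem_prod]
  by_cases ha : σ a = a <;> by_cases hb : σ b = b
  · omega
  · exact ⟨hmemT' a b hb (by omega) (by omega), hsupp b hb⟩
  · exact ⟨hsupp a ha, hmemT a b ha (by omega) (by omega)⟩
  · exact ⟨hsupp a ha, hsupp b hb⟩


private lemma mdafc_swap_lt {k a b : ℤ} (hab : a < b) (hne : ¬(a = k ∧ b = k + 1)) :
    Equiv.swap k (k+1) a < Equiv.swap k (k+1) b := by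
  simp only [Equiv.swap_apply_def]
  split_ifs <;> omega

private lemma mdafc_phi_invol (k : ℤ) :
    Function.Involutive (fun p : ℤ × ℤ => (Equiv.swap k (k+1) p.1, Equiv.swap k (k+1) p.2)) := by
  intro p; simp

private lemma mdafc_mem_iff (σ : Equiv.Perm ℤ) (k : ℤ) {p : ℤ × ℤ}
    (h1 : p.1 < p.2) (h2 : p ≠ (k, k+1)) :
    p ∈ mdafc_invSet (σ * Equiv.swap k (k+1)) ↔
      (Equiv.swap k (k+1) p.1, Equiv.swap k (k+1) p.2) ∈ mdafc_invSet σ := by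
  have hne : ¬(p.1 = k ∧ p.2 = k + 1) := by
    intro ⟨u, v⟩; exact h2 (Prod.ext u v)
  have hlt := mdafc_swap_lt h1 hne
  constructor
  · rintro ⟨-, hi⟩
    exact ⟨hlt, by simpa [Equiv.Perm.mul_apply] using hi⟩
  · rintro ⟨-, hi⟩
    exact ⟨h1, by simpa [Equiv.Perm.mul_apply] using hi⟩

private lemma mdafc_phi_ne (k : ℤ) {p : ℤ × ℤ} (h1 : p.1 < p.2) :
    (Equiv.swap k (k+1) p.1, Equiv.swap k (k+1) p.2) ≠ (k, k+1) := by
  intro hc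
  rw [Prod.mk.injEq] at hc
  have e1 : p.1 = k + 1 := by
    have := congrArg (Equiv.swap k (k+1)) hc.1
    simpa using this
  have e2 : p.2 = k := by
    have := congrArg (Equiv.swap k (k+1)) hc.2
    simpa using this
  omega

private lemma mdafc_diff_eq (σ : Equiv.Perm ℤ) (k : ℤ) :
    mdafc_invSet (σ * Equiv.swap k (k+1)) \ {(k, k+1)} =
      (fun p : ℤ × ℤ => (Equiv.swap k (k+1) p.1, Equiv.swap k (k+1) p.2)) ''
        (mdafc_invSet σ \ {(k, k+1)}) := by
  have hswap : ∀ τ : Equiv.Perm ℤ, τ * Equiv.swap k (k+1) * Equiv.swap k (k+1) = τ := by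
    intro τ; rw [mul_assoc, Equiv.swap_mul_self, mul_one]
  ext p
  constructor
  · rintro ⟨hp, hpc⟩
    have h1 : p.1 < p.2 := hp.1
    have h2 : p ≠ (k, k+1) := hpc
    exact ⟨_, ⟨(mdafc_mem_iff σ k h1 h2).1 hp, mdafc_phi_ne k h1⟩, mdafc_phi_invol k p⟩
  · rintro ⟨q, ⟨hq, hqc⟩, rfl⟩
    have h1 : q.1 < q.2 := hq.1
    have h2 : q ≠ (k, k+1) := hqc
    refine ⟨?_, mdafc_phi_ne k h1⟩
    have := mdafc_mem_iff (σ * Equiv.swap k (k+1)) k h1 h2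
    rw [hswap σ] at this
    exact this.1 hq

private lemma mdafc_c_mem_lt (σ : Equiv.Perm ℤ) (k : ℤ) (hlt : σ k < σ (k+1)) :
    ((k, k+1) : ℤ × ℤ) ∈ mdafc_invSet (σ * Equiv.swap k (k+1)) ∧
      ((k, k+1) : ℤ × ℤ) ∉ mdafc_invSet σ := by
  constructor
  · refine ⟨by omega, ?_⟩
    simp [Equiv.Perm.mul_apply, Equiv.swap_apply_left, Equiv.swap_apply_right, hlt]
  · rintro ⟨-, hi⟩
    simp only at hi
    omega

private lemma mdafc_inv_mul_swap_lt (σ : Equiv.Perm ℤ) (h : mdafc_FS σ) (k : ℤ)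
    (hlt : σ k < σ (k+1)) :
    (mdafc_invSet (σ * Equiv.swap k (k+1))).ncard = (mdafc_invSet σ).ncard + 1 := by
  have hfin1 : (mdafc_invSet σ).Finite := mdafc_invSet_finite σ h
  have hfin2 : (mdafc_invSet (σ * Equiv.swap k (k+1))).Finite :=
    mdafc_invSet_finite _ (mdafc_FS_mul h (mdafc_FS_swap k))
  obtain ⟨hc1, hc2⟩ := mdafc_c_mem_lt σ k hlt
  have key := mdafc_diff_eq σ k
  have hinj : Function.Injective
      (fun p : ℤ × ℤ => (Equiv.swap k (k+1) p.1, Equiv.swap k (k+1) p.2)) :=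
    (mdafc_phi_invol k).injective
  calc (mdafc_invSet (σ * Equiv.swap k (k+1))).ncard
      = (mdafc_invSet (σ * Equiv.swap k (k+1)) \ {(k, k+1)}).ncard + 1 :=
        (Set.ncard_diff_singleton_add_one hc1 hfin2).symm
    _ = ((fun p : ℤ × ℤ => (Equiv.swap k (k+1) p.1, Equiv.swap k (k+1) p.2)) ''
          (mdafc_invSet σ \ {(k, k+1)})).ncard + 1 := by rw [key]
    _ = (mdafc_invSet σ \ {(k, k+1)}).ncard + 1 := by
          rw [Set.ncard_image_of_injective _ hinj]
    _ = (mdafc_invSet σ).ncard + 1 := by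
          rw [Set.diff_singleton_eq_self hc2]

private lemma mdafc_inv_mul_swap_gt (σ : Equiv.Perm ℤ) (h : mdafc_FS σ) (k : ℤ)
    (hgt : σ (k+1) < σ k) :
    (mdafc_invSet (σ * Equiv.swap k (k+1))).ncard + 1 = (mdafc_invSet σ).ncard := by
  set τ := σ * Equiv.swap k (k+1) with hτ
  have hστ : σ = τ * Equiv.swap k (k+1) := by
    rw [hτ, mul_assoc, Equiv.swap_mul_self, mul_one]
  have hFSτ : mdafc_FS τ := mdafc_FS_mul h (mdafc_FS_swap k)
  have hτlt : τ k < τ (k+1) := by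
    simp only [hτ, Equiv.Perm.mul_apply, Equiv.swap_apply_left, Equiv.swap_apply_right]
    exact hgt
  have := mdafc_inv_mul_swap_lt τ hFSτ k hτlt
  rw [← hστ] at this
  omega

private lemma mdafc_prod_append (ks : List ℤ) (k : ℤ) :
    ((ks ++ [k]).map fun j => Equiv.swap j (j + 1)).prod =
      ((ks.map fun j => Equiv.swap j (j + 1)).prod) * Equiv.swap k (k + 1) := by
  rw [List.map_append, List.prod_append]
  simp

private lemma mdafc_length_ge_inv (ks : List ℤ) :
    (mdafc_invSet ((ks.map fun k => Equiv.swap k (k + 1)).prod)).ncard ≤ ks.length := by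
  induction ks using List.reverseRecOn with
  | nil =>
      have h1 : mdafc_invSet (1 : Equiv.Perm ℤ) = ∅ := by
        ext ⟨a, b⟩
        simp only [mdafc_invSet, Set.mem_setOf_eq, Equiv.Perm.one_apply,
          Set.mem_empty_iff_false, iff_false, not_and]
        omega
      simp only [List.map_nil, List.prod_nil, List.length_nil, h1, Set.ncard_empty, le_refl]
  | append_singleton ks k ih =>
      rw [mdafc_prod_append]
      set σ' := (ks.map fun j => Equiv.swap j (j + 1)).prod with hσ'
      have hFS : mdafc_FS σ' := mdafc_FS_prod ks
      rcases lt_trichotomy (σ' k) (σ' (k+1)) with h | h | h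
      · have := mdafc_inv_mul_swap_lt σ' hFS k h
        rw [this]; simp only [List.length_append, List.length_singleton]; omega
      · exact absurd (σ'.injective h) (by omega)
      · have := mdafc_inv_mul_swap_gt σ' hFS k h
        simp only [List.length_append, List.length_singleton]; omega

private lemma mdafc_exists_ge_fixed (σ : Equiv.Perm ℤ) (h : mdafc_FS σ) (a : ℤ) :
    ∃ b, a ≤ b ∧ σ b = b := by
  by_contra hc
  push_neg at hc
  have hsub : Set.Ici a ⊆ {n | σ n ≠ n} := fun n hn => hc n hn
  exact Set.Ici_infinite a (h.subset hsub)

private lemma mdafc_no_inv_id (σ : Equiv.Perm ℤ) (h : mdafc_FS σ)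
    (hno : mdafc_invSet σ = ∅) : σ = 1 := by
  have hmono : ∀ a b : ℤ, a < b → σ a < σ b := by
    intro a b hab
    have h1 : ¬ σ b < σ a := by
      intro hc
      have : (a, b) ∈ mdafc_invSet σ := ⟨hab, hc⟩
      rw [hno] at this; exact this
    have h2 : σ a ≠ σ b := fun hc => (by omega : a ≠ b) (σ.injective hc)
    omega
  have hgrow : ∀ (a : ℤ) (n : ℕ), σ a + n ≤ σ (a + n) := by
    intro a n
    induction n with
    | zero => simp
    | succ m ih =>
        have := hmono (a + m) (a + (m+1)) (by push_cast; omega)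
        push_cast at this ⊢
        push_cast at ih
        omega
  have hle : ∀ a : ℤ, σ a ≤ a := by
    intro a
    obtain ⟨b, hab, hfb⟩ := mdafc_exists_ge_fixed σ h a
    have := hgrow a (b - a).toNat
    rw [show a + ((b - a).toNat : ℤ) = b by omega] at this
    omega
  have hge : ∀ a : ℤ, a ≤ σ a := by
    intro a
    have hexle : ∃ b, b ≤ a ∧ σ b = b := by
      by_contra hc
      push_neg at hc
      have hsub : Set.Iic a ⊆ {n | σ n ≠ n} := fun n hn => hc n hn
      exact Set.Iic_infinite a (h.subset hsub)
    obtain ⟨b, hba, hfb⟩ := hexle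
    have := hgrow b (a - b).toNat
    rw [show b + (((a - b).toNat : ℕ) : ℤ) = a by omega] at this
    omega
  ext a
  simp only [Equiv.Perm.one_apply]
  exact le_antisymm (hle a) (hge a)

private lemma mdafc_find_descent (σ : Equiv.Perm ℤ) :
    ∀ (n : ℕ) (a : ℤ), σ (a + (n+1 : ℕ)) < σ a → ∃ k, σ (k+1) < σ k := by
  intro n
  induction n with
  | zero =>
      intro a h
      exact ⟨a, by push_cast at h; convert h using 2 <;> omega⟩
  | succ m ih =>
      intro a h
      by_cases hd : σ (a+1) < σ a
      · exact ⟨a, hd⟩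
      · push_neg at hd
        refine ih (a+1) ?_
        have : (a + 1) + ((m+1 : ℕ) : ℤ) = a + ((m+1+1 : ℕ) : ℤ) := by push_cast; omega
        rw [this]
        omega

private lemma mdafc_exists_word :
    ∀ (n : ℕ) (σ : Equiv.Perm ℤ), mdafc_FS σ → (mdafc_invSet σ).ncard = n →
      ∃ ks : List ℤ, σ = (ks.map fun k => Equiv.swap k (k + 1)).prod ∧ ks.length = n := by
  intro n
  induction n using Nat.strong_induction_on with
  | _ n ih =>
      intro σ h hn
      rcases Nat.eq_zero_or_pos n with h0 | hpos
      · subst h0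
        have hempty : mdafc_invSet σ = ∅ :=
          (Set.ncard_eq_zero (mdafc_invSet_finite σ h)).1 hn
        refine ⟨[], ?_, rfl⟩
        rw [mdafc_no_inv_id σ h hempty]
        simp
      · have hne : (mdafc_invSet σ).Nonempty := by
          apply Set.nonempty_of_ncard_ne_zero
          omega
        obtain ⟨⟨a, b⟩, hab, hinv⟩ := hne
        -- find adjacent descent
        have hb : b = a + (((b - a - 1).toNat + 1 : ℕ) : ℤ) := by
          simp only [Set.mem_setOf_eq] at hab
          push_cast
          omega
        obtain ⟨k, hk⟩ := mdafc_find_descent σ ((b - a - 1).toNat) a (by rw [← hb]; exact hinv)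
        set σ' := σ * Equiv.swap k (k+1) with hσ'
        have hFS' : mdafc_FS σ' := mdafc_FS_mul h (mdafc_FS_swap k)
        have hcard : (mdafc_invSet σ').ncard + 1 = n := by
          rw [← hn]; exact mdafc_inv_mul_swap_gt σ h k hk
        obtain ⟨ks', hks'1, hks'2⟩ := ih (mdafc_invSet σ').ncard (by omega) σ' hFS' rfl
        refine ⟨ks' ++ [k], ?_, by simp [hks'2]; omega⟩
        rw [mdafc_prod_append, ← hks'1, hσ', mul_assoc, Equiv.swap_mul_self, mul_one]

private lemma mdafc_swap_cut {k x : ℤ} (hne : k + 1 ≠ x) (n : ℤ) :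
    Equiv.swap k (k+1) n < x ↔ n < x := by
  simp only [Equiv.swap_apply_def]
  split_ifs <;> omega

private lemma mdafc_image_iff (σ : Equiv.Perm ℤ) (S : Set ℤ) (h : (⇑σ) '' S = S) :
    ∀ n, σ n ∈ S ↔ n ∈ S := by
  intro n
  constructor
  · intro hn
    rw [← h] at hn
    obtain ⟨m, hm, hmn⟩ := hn
    rwa [← σ.injective hmn]
  · intro hn
    rw [← h]
    exact ⟨n, hn, rfl⟩

private lemma mdafc_iff_image (σ : Equiv.Perm ℤ) (S : Set ℤ) (h : ∀ n, σ n ∈ S ↔ n ∈ S) :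
    (⇑σ) '' S = S := by
  ext n
  constructor
  · rintro ⟨m, hm, rfl⟩
    exact (h m).2 hm
  · intro hn
    refine ⟨σ⁻¹ n, ?_, by simp⟩
    have : σ (σ⁻¹ n) ∈ S := by simpa using hn
    exact (h _).1 this

private lemma mdafc_no_cross (x : ℤ) (ks : List ℤ) :
    ∀ σ : Equiv.Perm ℤ, σ = (ks.map fun k => Equiv.swap k (k + 1)).prod →
      (∀ ks' : List ℤ, σ = (ks'.map fun k => Equiv.swap k (k + 1)).prod →
        ks.length ≤ ks'.length) →
      (∀ n, σ n < x ↔ n < x) → ∀ k ∈ ks, k + 1 ≠ x := by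
  induction ks using List.reverseRecOn with
  | nil => intro σ _ _ _ k hk; simp at hk
  | append_singleton ks k ih =>
      intro σ hdec hmin hcut
      have hFS : mdafc_FS σ := by rw [hdec]; exact mdafc_FS_prod _
      have hσ' : σ * Equiv.swap k (k+1) = (ks.map fun j => Equiv.swap j (j + 1)).prod := by
        rw [hdec, mdafc_prod_append, mul_assoc, Equiv.swap_mul_self, mul_one]
      -- last letter does not cross
      have hk : k + 1 ≠ x := by
        intro hc
        have h1 : σ k < x := (hcut k).2 (by omega)
        have h2 : ¬ σ (k+1) < x := fun hcon => by
          have := (hcut (k+1)).1 hcon; omega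
        have hlt : σ k < σ (k+1) := by omega
        have hA := mdafc_inv_mul_swap_lt σ hFS k hlt
        -- minimality: (ks ++ [k]).length ≤ inv σ
        obtain ⟨w, hw1, hw2⟩ := mdafc_exists_word (mdafc_invSet σ).ncard σ hFS rfl
        have hmin1 : (ks ++ [k]).length ≤ (mdafc_invSet σ).ncard := by
          rw [← hw2]; exact hmin w hw1
        have hB : (mdafc_invSet (σ * Equiv.swap k (k+1))).ncard ≤ ks.length := by
          rw [hσ']; exact mdafc_length_ge_inv ks
        simp only [List.length_append, List.length_singleton] at hmin1
        omega
      intro j hj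
      rcases List.mem_append.1 hj with hj | hj
      · -- apply IH to σ' = σ * swap k (k+1)
        refine ih (σ * Equiv.swap k (k+1)) hσ' ?_ ?_ j hj
        · intro ks'' h''
          have : σ = ((ks'' ++ [k]).map fun j => Equiv.swap j (j + 1)).prod := by
            rw [mdafc_prod_append, ← h'', mul_assoc, Equiv.swap_mul_self, mul_one]
          have := hmin _ this
          simp only [List.length_append, List.length_singleton] at this ⊢
          omega
        · intro n
          rw [Equiv.Perm.mul_apply, hcut _, mdafc_swap_cut hk n]
      · simp only [List.mem_singleton] at hj
        subst hj
        exact hk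

/-- Let `σ` be a finite permutation of `ℤ` written as a product of adjacent
transpositions `(k, k+1)` for `k ∈ ks`, with the minimal number of factors.
If `σ` fixes `{n < x}` setwise then `x ≠ k + 1` for every `k ∈ ks`; if `σ` fixes
`{n > x}` setwise then `x ≠ k` for every `k ∈ ks`. -/
theorem minimal_decomposition_avoids_fixed_cuts (σ : Equiv.Perm ℤ)
    (hfin : {n : ℤ | σ n ≠ n}.Finite)
    (ks : List ℤ)
    (hdecomp : σ = (ks.map fun k => Equiv.swap k (k + 1)).prod)
    (hmin : ∀ ks' : List ℤ,
      σ = (ks'.map fun k => Equiv.swap k (k + 1)).prod → ks.length ≤ ks'.length)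
    (x : ℤ) :
    ((⇑σ) '' {n : ℤ | n < x} = {n : ℤ | n < x} → ∀ k ∈ ks, x ≠ k + 1) ∧
    ((⇑σ) '' {n : ℤ | x < n} = {n : ℤ | x < n} → ∀ k ∈ ks, x ≠ k) := by
  constructor
  · intro himg k hk hx
    have hiff : ∀ n, σ n < x ↔ n < x := by
      intro n
      have := mdafc_image_iff σ {n : ℤ | n < x} himg n
      simpa using this
    exact mdafc_no_cross x ks σ hdecomp hmin hiff k hk hx.symm
  · intro himg k hk hx
    have hiff : ∀ n, σ n < x + 1 ↔ n < x + 1 := by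
      intro n
      have := mdafc_image_iff σ {n : ℤ | x < n} himg n
      simp only [Set.mem_setOf_eq] at this
      omega
    exact mdafc_no_cross (x+1) ks σ hdecomp hmin hiff k hk (by omega)
end
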